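/- arXiv:1201.0924 — 6 statements merged into one kernel-verified Lean document; each statement's English description precedes it below -/
import Mathlib

section
/- Let G be a graph on n vertices with no isolated vertices. Then the self-similarity ISO(G) is at least (n-2)/4, where ISO(G) is the largest integer s such that G contains two edge-disjoint subgraphs with s edges each that are isomorphic as graphs. -/
/-!
A graph without isolated vertices is covered by vertex-disjoint stars with at least one edge
each: encode a star forest by the map sending every vertex to the centre of its star, and take
one with as few edgeless stars as possible; an edgeless star {x} can always be absorbed by a
neighbour's star, so there are none.

Now split the leaves of each star with `k ≥ 2` leaves into two halves of `⌊k/2⌋` leaves, and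
split the `q` one-edge stars into two halves of `⌊q/2⌋` stars. The two halves are edge-disjoint
isomorphic star forests, and counting vertices star by star gives `n ≤ 4 s + 2`, since
`k + 1 ≤ 4 ⌊k/2⌋` for `k ≥ 2` and `2 q ≤ 4 ⌊q/2⌋ + 2`.
-/

open Finset Function

theorem Set.InjOn.exists_perm_eqOn {α : Type*} [Finite α] {f : α → α} {s : Set α}
    (hf : s.InjOn f) : ∃ π : Equiv.Perm α, s.EqOn π f := by
  have := Fintype.ofFinite α
  have hmaps : s.MapsTo f (Finset.univ : Finset α) := fun _ _ =>
    Finset.mem_coe.2 (Finset.mem_univ _)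
  obtain ⟨g, hg⟩ := hmaps.exists_equiv_extend_of_card_eq Finset.card_univ.symm hf
  exact ⟨g.trans (Equiv.subtypeUnivEquiv Finset.mem_univ), hg⟩

namespace Finset

variable {α : Type*} [DecidableEq α]

theorem exists_subset_injOn_sdiff (s : Finset α) :
    ∃ t ⊆ s, ∃ f : α → α,
      Set.InjOn f t ∧ Set.MapsTo f t ↑(s \ t) ∧ #s ≤ 2 * #t + 1 := by
  obtain ⟨t, hts, ht⟩ := s.exists_subset_card_eq (n := #s / 2) (by omega)
  obtain ⟨u, hus, hu⟩ := (s \ t).exists_subset_card_eq (n := #t)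
    (by rw [card_sdiff_of_subset hts]; omega)
  let φ : t ≃ u := Fintype.equivOfCardEq (by simp [hu])
  refine ⟨t, hts, fun v => if h : v ∈ t then φ ⟨v, h⟩ else v, ?_, ?_, by omega⟩
  · intro v hv w hw hvw
    simpa [dif_pos (mem_coe.1 hv), dif_pos (mem_coe.1 hw), Subtype.val_inj] using hvw
  · intro v hv
    simpa [dif_pos (mem_coe.1 hv)] using hus (φ ⟨v, hv⟩).2

noncomputable def half (s : Finset α) : Finset α :=
  s.exists_subset_injOn_sdiff.choose

noncomputable def halfPairing (s : Finset α) : α → α :=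
  s.exists_subset_injOn_sdiff.choose_spec.2.choose

theorem half_subset (s : Finset α) : s.half ⊆ s :=
  s.exists_subset_injOn_sdiff.choose_spec.1

theorem injOn_halfPairing (s : Finset α) : Set.InjOn s.halfPairing s.half :=
  s.exists_subset_injOn_sdiff.choose_spec.2.choose_spec.1

theorem mapsTo_halfPairing (s : Finset α) : Set.MapsTo s.halfPairing s.half ↑(s \ s.half) :=
  s.exists_subset_injOn_sdiff.choose_spec.2.choose_spec.2.1

theorem card_le_two_mul_card_half_add_one (s : Finset α) : #s ≤ 2 * #s.half + 1 :=
  s.exists_subset_injOn_sdiff.choose_spec.2.choose_spec.2.2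

end Finset

namespace SimpleGraph

variable {V : Type*} {G : SimpleGraph V} {c : V → V} {v w x y : V}

/-- A spanning forest of stars of `G` (possibly single vertices), encoded by the map `c` sending
every vertex to the centre of its star; the centres are the fixed points of `c`. -/
structure IsStarRetraction (G : SimpleGraph V) (c : V → V) : Prop where
  idem : ∀ v, c (c v) = c v
  adj : ∀ v, c v ≠ v → G.Adj v (c v)

theorem ne_apply_of_apply_ne (hc : ∀ v, c (c v) = c v) (hv : c v ≠ v) (w : V) :
    c w ≠ v :=
  fun h => hv (h ▸ hc w)

def IsLonely (c : V → V) (x : V) : Prop := ∀ v, c v = x ↔ v = x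

theorem ssubset_setOf_isLonely {c' : V → V} (hx : IsLonely c x) (hx' : ¬ IsLonely c' x)
    (h : ∀ z, IsLonely c' z → IsLonely c z) : {z | IsLonely c' z} ⊂ {z | IsLonely c z} :=
  Set.ssubset_iff_of_subset h |>.2 ⟨x, hx, hx'⟩

theorem IsStarRetraction.exists_lonely_ssubset (hc : G.IsStarRetraction c) (hx : IsLonely c x)
    (hxy : G.Adj x y) :
    ∃ c', G.IsStarRetraction c' ∧ {z | IsLonely c' z} ⊂ {z | IsLonely c z} := by
  classical
  -- If `y` is a centre, `x` joins its star. Otherwise `y` leaves its star for `x`, unless that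
  -- would leave the old centre lonely: then `y` becomes the centre of `x`, `y` and the old centre.
  obtain ⟨hidem, hadj⟩ := hc
  have hne := hxy.ne
  unfold IsLonely at *
  by_cases hy : c y = y
  · refine ⟨update c x y, ⟨fun v => ?_, fun v => ?_⟩, ssubset_setOf_isLonely hx ?_ ?_⟩
    · grind [update_apply]
    · grind [update_apply]
    · intro h; have := h x; grind [update_apply]
    · intro z hz v; have := hz v; grind [update_apply]
  have hyc := (hadj y hy).symm
  have hyx := hxy.symm
  by_cases hw : ∃ w, w ≠ y ∧ w ≠ c y ∧ c w = c y
  · obtain ⟨w, hwy, hwc, hw⟩ := hw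
    refine ⟨update c y x, ⟨fun v => ?_, fun v => ?_⟩, ssubset_setOf_isLonely hx ?_ ?_⟩
    · grind [update_apply]
    · grind [update_apply]
    · intro h; have := h y; grind [update_apply]
    · intro z hz v; have := hz v; have := hz w; grind [update_apply]
  · push Not at hw
    refine ⟨fun v => if c v = c y ∨ v = x then y else c v, ⟨fun v => ?_, fun v => ?_⟩,
      ssubset_setOf_isLonely hx ?_ ?_⟩
    · grind
    · grind
    · intro h; have := h x; grind
    · intro z hz v; have := hz v; have := hz (c y); grind

theorem exists_isStarRetraction_not_isLonely [Finite V] (h : ∀ v, (G.neighborSet v).Nonempty) :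
    ∃ c, G.IsStarRetraction c ∧ ∀ x, ¬ IsLonely c x := by
  obtain ⟨c, hc, hmin⟩ := Set.exists_min_image {c : V → V | G.IsStarRetraction c}
    (fun c => {z | IsLonely c z}.ncard) (Set.toFinite _)
    ⟨id, fun _ => rfl, fun _ h => (h rfl).elim⟩
  refine ⟨c, hc, fun x hx => ?_⟩
  obtain ⟨y, hy⟩ := h x
  obtain ⟨c', hc', hlt⟩ := hc.exists_lonely_ssubset hx hy
  exact (hmin c' hc').not_gt (Set.ncard_lt_ncard hlt)

def starForest (c : V → V) (S : Set V) : SimpleGraph V :=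
  fromEdgeSet ((fun v => s(v, c v)) '' S)

theorem IsStarRetraction.starForest_le (hc : G.IsStarRetraction c) (S : Set V) :
    starForest c S ≤ G := by
  rw [starForest, fromEdgeSet_le]
  rintro _ ⟨⟨v, -, rfl⟩, hdiag⟩
  exact hc.adj v fun h => hdiag (by simp [h])

theorem injOn_mk_apply (hc : ∀ v, c (c v) = c v) :
    Set.InjOn (fun v => s(v, c v)) {v | c v ≠ v} := by
  intro v hv w _ hvw
  rcases Sym2.eq_iff.1 hvw with ⟨h, -⟩ | ⟨h, -⟩
  · exact h
  · exact absurd h.symm (ne_apply_of_apply_ne hc hv w)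

theorem edgeSet_starForest {S : Set V} (hS : ∀ v ∈ S, c v ≠ v) :
    (starForest c S).edgeSet = (fun v => s(v, c v)) '' S := by
  rw [starForest, edgeSet_fromEdgeSet, sdiff_eq_left, Set.disjoint_left]
  rintro _ ⟨v, hv, rfl⟩ hdiag
  exact hS v hv (Sym2.mk_isDiag_iff.1 hdiag).symm

theorem ncard_edgeSet_starForest (hc : ∀ v, c (c v) = c v) {S : Set V}
    (hS : ∀ v ∈ S, c v ≠ v) :
    (starForest c S).edgeSet.ncard = S.ncard := by
  rw [edgeSet_starForest hS, ((injOn_mk_apply hc).mono hS).ncard_image]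

theorem disjoint_edgeSet_starForest (hc : ∀ v, c (c v) = c v) {S T : Set V}
    (hS : ∀ v ∈ S, c v ≠ v) (hT : ∀ v ∈ T, c v ≠ v) (hST : Disjoint S T) :
    Disjoint (starForest c S).edgeSet (starForest c T).edgeSet := by
  rw [edgeSet_starForest hS, edgeSet_starForest hT]
  exact hST.image (injOn_mk_apply hc) hS hT

def starForestIso (π : Equiv.Perm V) {S : Set V} (hπ : ∀ v ∈ S, π (c v) = c (π v)) :
    starForest c S ≃g starForest c (π '' S) where
  toEquiv := π
  map_rel_iff' {u w} := by
    have himage :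
        (fun v => s(v, c v)) '' (π '' S) = Sym2.map π '' ((fun v => s(v, c v)) '' S) := by
      simp only [Set.image_image, Sym2.map_mk]
      exact Set.image_congr fun v hv => by rw [hπ v hv]
    simp [starForest, fromEdgeSet_adj, himage]

theorem exists_perm_of_center_iff [Finite V] (hc : ∀ v, c (c v) = c v) {S : Set V}
    {e : V → V} (hS : ∀ v ∈ S, c v ≠ v) (he : ∀ v ∈ S, c (e v) ≠ e v) (he_inj : S.InjOn e)
    (hce : ∀ v ∈ S, ∀ w ∈ S, c v = c w ↔ c (e v) = c (e w)) :
    ∃ π : Equiv.Perm V, ∀ v ∈ S, π v = e v ∧ π (c v) = c (e v) := by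
  classical
  -- `φ` extends `e` to the centres by `φ (c w) = c (e w)`, which `hce` makes well defined.
  let φ : V → V := fun v =>
    if v ∈ S then e v else if h : ∃ w ∈ S, c w = v then c (e h.choose) else v
  have hφc : ∀ v ∈ S, φ (c v) = c (e v) := fun v hv => by
    have h : ∃ w ∈ S, c w = c v := ⟨v, hv, rfl⟩
    simp only [φ, if_neg fun h => hS _ h (hc v), dif_pos h]
    exact (hce _ h.choose_spec.1 v hv).1 h.choose_spec.2
  obtain ⟨π, hπ⟩ := Set.InjOn.exists_perm_eqOn (f := φ) (s := S ∪ c '' S) <| by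
    rintro v (hv | ⟨v, hv, rfl⟩) w (hw | ⟨w, hw, rfl⟩) h
    · simp only [φ, if_pos hv, if_pos hw] at h
      exact he_inj hv hw h
    · rw [hφc w hw] at h
      simp only [φ, if_pos hv] at h
      exact absurd h.symm (ne_apply_of_apply_ne hc (he v hv) _)
    · rw [hφc v hv] at h
      simp only [φ, if_pos hw] at h
      exact absurd h (ne_apply_of_apply_ne hc (he w hw) _)
    · rw [hφc v hv, hφc w hw] at h
      exact (hce v hv w hw).2 h
  exact ⟨π, fun v hv => ⟨(hπ (Or.inl hv)).trans (if_pos hv),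
    (hπ (Or.inr ⟨v, hv, rfl⟩)).trans (hφc v hv)⟩⟩

theorem IsStarRetraction.exists_iso_starForest [Finite V] (hc : G.IsStarRetraction c)
    {S : Set V} {e : V → V} (hS : ∀ v ∈ S, c v ≠ v) (he : ∀ v ∈ S, c (e v) ≠ e v)
    (he_inj : S.InjOn e) (hce : ∀ v ∈ S, ∀ w ∈ S, c v = c w ↔ c (e v) = c (e w))
    (hdisj : Disjoint S (e '' S)) :
    ∃ H₁ H₂ : SimpleGraph V, H₁ ≤ G ∧ H₂ ≤ G ∧ Disjoint H₁.edgeSet H₂.edgeSet ∧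
      Nonempty (H₁ ≃g H₂) ∧ H₁.edgeSet.ncard = S.ncard ∧ H₂.edgeSet.ncard = S.ncard := by
  obtain ⟨π, hπ⟩ := exists_perm_of_center_iff hc.idem hS he he_inj hce
  have himage : π '' S = e '' S := Set.image_congr fun v hv => (hπ v hv).1
  have heS : ∀ v ∈ e '' S, c v ≠ v := by
    rintro _ ⟨v, hv, rfl⟩
    exact he v hv
  refine ⟨starForest c S, starForest c (e '' S), hc.starForest_le S, hc.starForest_le _,
    disjoint_edgeSet_starForest hc.idem hS heS hdisj,
    ⟨himage ▸ starForestIso π fun v hv => by rw [(hπ v hv).2, (hπ v hv).1]⟩,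
    ncard_edgeSet_starForest hc.idem hS, ?_⟩
  rw [ncard_edgeSet_starForest hc.idem heS, he_inj.ncard_image]

section Pairing

variable [Fintype V] [DecidableEq V]

def leafSet (c : V → V) (x : V) : Finset V := {v | v ≠ x ∧ c v = x}

def edgeStarLeaves (c : V → V) : Finset V := {v | c v ≠ v ∧ #(leafSet c (c v)) = 1}

/-- Leaves of one-edge stars are paired across stars, the leaves of any other star within it. -/
def leafGroup (c : V → V) (x : V) : Finset V :=
  if #(leafSet c x) = 1 then edgeStarLeaves c else leafSet c x

noncomputable def pairedLeaves (c : V → V) : Finset V :=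
  {v | c v ≠ v ∧ v ∈ (leafGroup c (c v)).half}

noncomputable def leafPairing (c : V → V) (v : V) : V :=
  (leafGroup c (c v)).halfPairing v

@[simp] theorem mem_leafSet : v ∈ leafSet c x ↔ v ≠ x ∧ c v = x := by simp [leafSet]

@[simp] theorem mem_edgeStarLeaves :
    v ∈ edgeStarLeaves c ↔ c v ≠ v ∧ #(leafSet c (c v)) = 1 := by
  simp [edgeStarLeaves]

@[simp] theorem mem_pairedLeaves :
    v ∈ pairedLeaves c ↔ c v ≠ v ∧ v ∈ (leafGroup c (c v)).half := by
  simp [pairedLeaves]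

theorem eq_of_apply_eq_of_card_leafSet_eq_one (h : #(leafSet c (c v)) = 1)
    (hv : c v ≠ v) (hw : c w ≠ w) (hvw : c v = c w) : v = w := by
  obtain ⟨u, hu⟩ := card_eq_one.1 h
  have hv' : v ∈ leafSet c (c v) := mem_leafSet.2 ⟨hv.symm, rfl⟩
  have hw' : w ∈ leafSet c (c v) := mem_leafSet.2 ⟨hvw ▸ hw.symm, hvw.symm⟩
  rw [hu, mem_singleton] at hv' hw'
  exact hv'.trans hw'.symm

theorem apply_ne_of_mem_leafGroup (hw : w ∈ leafGroup c x) : c w ≠ w := by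
  unfold leafGroup at hw
  split_ifs at hw
  · exact (mem_edgeStarLeaves.1 hw).1
  · exact fun h => (mem_leafSet.1 hw).1 (h.symm.trans (mem_leafSet.1 hw).2)

theorem apply_eq_of_mem_leafGroup (hx : #(leafSet c x) ≠ 1) (hw : w ∈ leafGroup c x) :
    c w = x := by
  rw [leafGroup, if_neg hx] at hw
  exact (mem_leafSet.1 hw).2

theorem card_leafSet_apply_eq_one (hx : #(leafSet c x) = 1) (hw : w ∈ leafGroup c x) :
    #(leafSet c (c w)) = 1 := by
  rw [leafGroup, if_pos hx] at hw
  exact (mem_edgeStarLeaves.1 hw).2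

theorem leafGroup_apply_of_mem (hw : w ∈ leafGroup c x) :
    leafGroup c (c w) = leafGroup c x := by
  by_cases hx : #(leafSet c x) = 1
  · rw [leafGroup, leafGroup, if_pos hx, if_pos (card_leafSet_apply_eq_one hx hw)]
  · rw [apply_eq_of_mem_leafGroup hx hw]

theorem leafPairing_mem (hv : v ∈ pairedLeaves c) :
    leafPairing c v ∈ leafGroup c (c v) \ (leafGroup c (c v)).half :=
  (leafGroup c (c v)).mapsTo_halfPairing (mem_pairedLeaves.1 hv).2

theorem apply_leafPairing_ne (hv : v ∈ pairedLeaves c) :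
    c (leafPairing c v) ≠ leafPairing c v :=
  apply_ne_of_mem_leafGroup (mem_sdiff.1 (leafPairing_mem hv)).1

theorem leafGroup_apply_leafPairing (hv : v ∈ pairedLeaves c) :
    leafGroup c (c (leafPairing c v)) = leafGroup c (c v) :=
  leafGroup_apply_of_mem (mem_sdiff.1 (leafPairing_mem hv)).1

theorem disjoint_pairedLeaves_image_leafPairing :
    Disjoint (pairedLeaves c : Set V) (leafPairing c '' pairedLeaves c) := by
  rw [Set.disjoint_right]
  rintro _ ⟨v, hv, rfl⟩ hv'
  have := (mem_pairedLeaves.1 hv').2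
  rw [leafGroup_apply_leafPairing hv] at this
  exact (mem_sdiff.1 (leafPairing_mem hv)).2 this

theorem injOn_leafPairing : Set.InjOn (leafPairing c) (pairedLeaves c) := by
  intro v hv w hw hvw
  have hgroup : leafGroup c (c v) = leafGroup c (c w) := by
    rw [← leafGroup_apply_leafPairing hv, hvw, leafGroup_apply_leafPairing hw]
  have hw' := (mem_pairedLeaves.1 hw).2
  rw [← hgroup] at hw'
  refine (leafGroup c (c v)).injOn_halfPairing (mem_pairedLeaves.1 hv).2 hw' ?_
  rwa [leafPairing, leafPairing, ← hgroup] at hvw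

theorem apply_eq_iff_apply_leafPairing_eq (hv : v ∈ pairedLeaves c) (hw : w ∈ pairedLeaves c) :
    c v = c w ↔ c (leafPairing c v) = c (leafPairing c w) := by
  have hev := (mem_sdiff.1 (leafPairing_mem hv)).1
  have hew := (mem_sdiff.1 (leafPairing_mem hw)).1
  by_cases hs : #(leafSet c (c v)) = 1
  · refine ⟨fun h => ?_, fun h => ?_⟩
    · rw [eq_of_apply_eq_of_card_leafSet_eq_one hs (mem_pairedLeaves.1 hv).1
        (mem_pairedLeaves.1 hw).1 h]
    · rw [injOn_leafPairing hv hw (eq_of_apply_eq_of_card_leafSet_eq_one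
        (card_leafSet_apply_eq_one hs hev) (apply_leafPairing_ne hv) (apply_leafPairing_ne hw) h)]
  · rw [apply_eq_of_mem_leafGroup hs hev]
    refine ⟨fun h => ?_, fun h => ?_⟩
    · rw [apply_eq_of_mem_leafGroup (h ▸ hs) hew, h]
    · by_cases hs' : #(leafSet c (c w)) = 1
      · have := card_leafSet_apply_eq_one hs' hew
        rw [← h] at this
        exact absurd this hs
      · rw [h, apply_eq_of_mem_leafGroup hs' hew]

theorem card_filter_card_leafSet_eq_one_le :
    #{v | #(leafSet c (c v)) = 1} ≤ 2 * #(edgeStarLeaves c) := by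
  calc #{v | #(leafSet c (c v)) = 1}
      ≤ #(edgeStarLeaves c ∪ (edgeStarLeaves c).image c) := card_le_card fun v hv => ?_
    _ ≤ #(edgeStarLeaves c) + #((edgeStarLeaves c).image c) := card_union_le _ _
    _ ≤ 2 * #(edgeStarLeaves c) := by
      have := card_image_le (s := edgeStarLeaves c) (f := c)
      omega
  rw [mem_filter] at hv
  by_cases hcv : c v = v
  · obtain ⟨u, hu⟩ := card_eq_one.1 hv.2
    obtain ⟨hu, hcu⟩ := mem_leafSet.1 (hu ▸ mem_singleton_self u)
    refine mem_union_right _ (mem_image.2 ⟨u, mem_edgeStarLeaves.2 ⟨?_, ?_⟩, hcu.trans hcv⟩)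
    · rw [hcu]; exact hu.symm
    · rw [hcu]; exact hv.2
  · exact mem_union_left _ (mem_edgeStarLeaves.2 ⟨hcv, hv.2⟩)

theorem card_filter_apply_eq_le (hc : ∀ v, c (c v) = c v) (hl : ∀ x, ¬ IsLonely c x)
    (hx : #(leafSet c x) ≠ 1) : #{v | c v = x} ≤ 4 * #(leafSet c x).half := by
  by_cases hcx : c x = x
  · have hsub : ({v | c v = x} : Finset V) ⊆ insert x (leafSet c x) := by
      intro v hv
      rw [mem_filter] at hv
      rw [mem_insert, mem_leafSet]
      tauto
    have hne : (leafSet c x).Nonempty := by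
      by_contra h
      refine hl x fun v => ⟨fun hv => ?_, by rintro rfl; exact hcx⟩
      by_contra hvx
      exact h ⟨v, mem_leafSet.2 ⟨hvx, hv⟩⟩
    have := card_le_card hsub
    have := card_insert_le x (leafSet c x)
    have := (leafSet c x).card_le_two_mul_card_half_add_one
    have := hne.card_pos
    omega
  · rw [filter_false_of_mem fun v _ => ne_apply_of_apply_ne hc hcx v]
    simp

theorem card_filter_card_leafSet_ne_one_le (hc : ∀ v, c (c v) = c v)
    (hl : ∀ x, ¬ IsLonely c x) :
    #{v | #(leafSet c (c v)) ≠ 1} ≤ 4 * #{v ∈ pairedLeaves c | #(leafSet c (c v)) ≠ 1} := by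
  rw [card_eq_sum_card_fiberwise (f := c) (t := univ) fun _ _ => mem_univ _,
    card_eq_sum_card_fiberwise (f := c) (t := univ) fun _ _ => mem_univ _, mul_sum]
  refine sum_le_sum fun x _ => ?_
  rw [filter_filter, filter_filter]
  by_cases hx : #(leafSet c x) = 1
  · rw [filter_false_of_mem fun v _ h => h.1 (by rw [h.2]; exact hx)]
    simp
  calc #{v | #(leafSet c (c v)) ≠ 1 ∧ c v = x}
      ≤ #{v | c v = x} := card_le_card (monotone_filter_right _ fun _ _ h => h.2)
    _ ≤ 4 * #(leafSet c x).half := card_filter_apply_eq_le hc hl hx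
    _ ≤ 4 * #{v ∈ pairedLeaves c | #(leafSet c (c v)) ≠ 1 ∧ c v = x} := by
      refine Nat.mul_le_mul_left 4 (card_le_card fun v hv => ?_)
      obtain ⟨hvx, hcv⟩ := mem_leafSet.1 ((leafSet c x).half_subset hv)
      rw [mem_filter, mem_pairedLeaves, hcv, leafGroup, if_neg hx]
      exact ⟨⟨hvx.symm, hv⟩, hx, rfl⟩

theorem card_le_four_mul_card_pairedLeaves_add_two (hc : ∀ v, c (c v) = c v)
    (hl : ∀ x, ¬ IsLonely c x) : Fintype.card V ≤ 4 * #(pairedLeaves c) + 2 := by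
  have hsplit := card_filter_add_card_filter_not (s := univ)
    fun v => #(leafSet c (c v)) = 1
  have hsplitP := card_filter_add_card_filter_not (s := pairedLeaves c)
    fun v => #(leafSet c (c v)) = 1
  have hhalf : #(edgeStarLeaves c).half ≤ #{v ∈ pairedLeaves c | #(leafSet c (c v)) = 1} := by
    refine card_le_card fun v hv => ?_
    obtain ⟨hcv, hs⟩ := mem_edgeStarLeaves.1 ((edgeStarLeaves c).half_subset hv)
    rw [mem_filter, mem_pairedLeaves, leafGroup, if_pos hs]
    exact ⟨⟨hcv, hv⟩, hs⟩
  have := (edgeStarLeaves c).card_le_two_mul_card_half_add_one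
  have := card_filter_card_leafSet_eq_one_le (c := c)
  have := card_filter_card_leafSet_ne_one_le hc hl
  simp only [← ne_eq] at hsplit hsplitP
  rw [← card_univ]
  omega

end Pairing

end SimpleGraph

open SimpleGraph in
/-- Every graph `G` on `n` vertices with no isolated vertices contains two edge-disjoint
isomorphic subgraphs each with at least `(n-2)/4` edges, i.e. `ISO(G) ≥ (n-2)/4`. -/
theorem stmt_2 {V : Type*} [Fintype V] (G : SimpleGraph V)
    (h : ∀ v, (G.neighborSet v).Nonempty) :
    ∃ H₁ H₂ : SimpleGraph V, H₁ ≤ G ∧ H₂ ≤ G ∧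
      Disjoint H₁.edgeSet H₂.edgeSet ∧ Nonempty (H₁ ≃g H₂) ∧
      ((Fintype.card V : ℝ) - 2) / 4 ≤ H₁.edgeSet.ncard ∧
      ((Fintype.card V : ℝ) - 2) / 4 ≤ H₂.edgeSet.ncard := by
  classical
  obtain ⟨c, hc, hl⟩ := exists_isStarRetraction_not_isLonely h
  obtain ⟨H₁, H₂, h₁, h₂, hdisj, hiso, hcard₁, hcard₂⟩ := hc.exists_iso_starForest
    (fun _ hv => (mem_pairedLeaves.1 hv).1) (fun _ => apply_leafPairing_ne) injOn_leafPairing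
    (fun _ hv _ hw => apply_eq_iff_apply_leafPairing_eq hv hw)
    disjoint_pairedLeaves_image_leafPairing
  have hbound : ((Fintype.card V : ℝ) - 2) / 4 ≤ (pairedLeaves c : Set V).ncard := by
    have : (Fintype.card V : ℝ) ≤ 4 * #(pairedLeaves c) + 2 := by
      exact_mod_cast card_le_four_mul_card_pairedLeaves_add_two hc.idem hl
    rw [Set.ncard_coe_finset]
    linarith
  exact ⟨H₁, H₂, h₁, h₂, hdisj, hiso, hcard₁ ▸ hbound, hcard₂ ▸ hbound⟩
end

section
/- Every star forest on n vertices contains two edge-disjoint isomorphic subgraphs, each having at least (n-2)/4 edges. -/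
/-!
Orient every edge of the star forest from a leaf to its centre (a one-edge star gets one of its
endpoints as centre): the graph becomes the graph of an idempotent map `p` sending each leaf to
its centre, and every permutation commuting with `p` is an automorphism. Pairing up the leaves
inside each star with at least two leaves, and pairing up the one-edge stars among themselves,
gives such an involution `φ`. The edges moved by an involutive automorphism fall into pairs
`{e, φ e}`; one edge from each pair spans `H₁`, and `H₂ = φ H₁` is edge-disjoint from it and
isomorphic to it. A `d`-star with `d ≥ 2` has `2 ⌊d/2⌋ ≥ (d + 1)/2` moved edges, and `k` one-edge
stars have `2 ⌊k/2⌋ ≥ k - 1` moved edges, so at least `(n - 2)/2` edges are moved.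
-/

open Finset Function Equiv

namespace Equiv.Perm

variable {α β : Type*} [Fintype α] [DecidableEq α] [DecidableEq β]

def IsFiberwisePairing (k : α → β) (s : Finset α) (σ : Perm α) : Prop :=
  Involutive σ ∧ σ.support ⊆ s ∧ (∀ x, k (σ x) = k x) ∧
    ∀ c, 2 * (#{x ∈ s | k x = c} / 2) ≤ #{x ∈ σ.support | k x = c}

theorem isFiberwisePairing_one {k : α → β} {s : Finset α} (hk : Set.InjOn k s) :
    IsFiberwisePairing k s 1 := by
  refine ⟨fun _ => rfl, by simp, fun _ => rfl, fun c => ?_⟩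
  have : #{x ∈ s | k x = c} ≤ 1 := card_le_one.2 fun x hx y hy => by
    simp only [mem_filter] at hx hy
    exact hk hx.1 hy.1 (hx.2.trans hy.2.symm)
  omega

theorem IsFiberwisePairing.swap_mul {k : α → β} {s : Finset α} {σ : Perm α} {a b : α}
    (hσ : IsFiberwisePairing k (s \ {a, b}) σ) (ha : a ∈ s) (hb : b ∈ s) (hab : k a = k b)
    (hne : a ≠ b) : IsFiberwisePairing k s (swap a b * σ) := by
  obtain ⟨hσ, hσs, hσk, hσc⟩ := hσ
  have hsub : {a, b} ⊆ s := insert_subset ha (singleton_subset_iff.2 hb)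
  have hdisj : (swap a b).Disjoint σ := by
    rw [disjoint_iff_disjoint_support, support_swap hne]
    exact disjoint_of_subset_right hσs disjoint_sdiff
  have hsupp : (swap a b * σ).support = {a, b} ∪ σ.support := by
    rw [hdisj.support_mul, support_swap hne]
  refine ⟨fun x => ?_, ?_, fun x => ?_, fun c => ?_⟩
  · have : swap a b * σ * (swap a b * σ) = 1 := by
      rw [hdisj.commute.symm.mul_mul_mul_comm, swap_mul_self, one_mul]
      exact Perm.ext hσ
    exact congrArg (· x) this
  · rw [hsupp]
    exact union_subset hsub (hσs.trans sdiff_subset)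
  · rw [mul_apply, swap_apply_def, ← hσk x]
    split_ifs with h₁ h₂
    · rw [h₁, hab]
    · rw [h₂, hab]
    · rfl
  · have hpair : #{x ∈ ({a, b} : Finset α) | k x = c} = 0 ∨
        #{x ∈ ({a, b} : Finset α) | k x = c} = 2 := by
      by_cases h : k a = c
      · right; rw [filter_true_of_mem (by simp [← hab, h]), card_pair hne]
      · left; simp [filter_eq_empty_iff, h, ← hab]
    have hs : #{x ∈ s | k x = c} =
        #{x ∈ ({a, b} : Finset α) | k x = c} + #{x ∈ s \ {a, b} | k x = c} := by
      rw [← card_union_of_disjoint (disjoint_filter_filter disjoint_sdiff), ← filter_union,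
        union_sdiff_of_subset hsub]
    have hsupp_card : #{x ∈ (swap a b * σ).support | k x = c} =
        #{x ∈ ({a, b} : Finset α) | k x = c} + #{x ∈ σ.support | k x = c} := by
      rw [hsupp, filter_union, card_union_of_disjoint
        (disjoint_filter_filter (disjoint_of_subset_right hσs disjoint_sdiff))]
    have := hσc c
    omega

theorem exists_isFiberwisePairing (k : α → β) (s : Finset α) :
    ∃ σ : Perm α, IsFiberwisePairing k s σ := by
  induction s using Finset.strongInduction with
  | H s ih =>
  by_cases hk : Set.InjOn k s
  · exact ⟨1, isFiberwisePairing_one hk⟩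
  obtain ⟨a, ha, b, hb, hab, hne⟩ : ∃ a ∈ s, ∃ b ∈ s, k a = k b ∧ a ≠ b := by
    simpa [Set.InjOn] using hk
  obtain ⟨σ, hσ⟩ := ih (s \ {a, b})
    (sdiff_ssubset (insert_subset ha (singleton_subset_iff.2 hb)) (insert_nonempty a {b}))
  exact ⟨swap a b * σ, hσ.swap_mul ha hb hab hne⟩

end Equiv.Perm

theorem Function.Involutive.exists_transversal {α : Type*} [Countable α] {f : α → α}
    (hf : Involutive f) (S : Set α) (hS : ∀ e ∈ S, f e ∈ S) :
    ∃ T ⊆ S, Disjoint T (f '' T) ∧ {e ∈ S | f e ≠ e} = T ∪ f '' T := by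
  obtain ⟨r, hr⟩ := exists_injective_nat α
  -- of each pair `{e, f e}` take the element with the smaller `r`
  refine ⟨{e ∈ S | r e < r (f e)}, fun e he => he.1, ?_, ?_⟩
  · refine Set.disjoint_left.2 fun _ he ⟨e', he', hfe'⟩ => ?_
    subst hfe'
    have := he.2
    rw [hf] at this
    exact (he'.2.trans this).false
  · ext e
    refine ⟨fun ⟨he, hfe⟩ => ?_, ?_⟩
    · rcases (hr.ne hfe).lt_or_gt with h | h
      · exact .inr ⟨f e, ⟨hS e he, by rwa [hf]⟩, hf e⟩
      · exact .inl ⟨he, h⟩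
    · rintro (he | ⟨e', he', rfl⟩)
      · exact ⟨he.1, fun h => (congrArg r h ▸ he.2).false⟩
      · refine ⟨hS e' he'.1, fun h => ?_⟩
        rw [hf] at h
        exact (congrArg r h ▸ he'.2).false

theorem Fintype.card_le_two_mul_add_two_of_fiberwise {α β : Type*} [Fintype α] [DecidableEq β]
    (κ : α → β) (S : Finset α) (b₀ : β)
    (h : ∀ b, #{v | κ v = b} ≤ 2 * #{x ∈ S | κ x = b} + if b = b₀ then 2 else 0) :
    Fintype.card α ≤ 2 * #S + 2 := by
  classical
  rw [← card_univ, card_eq_sum_card_image κ univ, card_eq_sum_card_fiberwise (f := κ)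
    (t := univ.image κ) fun x _ => mem_image_of_mem κ (mem_univ x)]
  calc ∑ b ∈ univ.image κ, #{v | κ v = b}
      ≤ ∑ b ∈ univ.image κ, (2 * #{x ∈ S | κ x = b} + if b = b₀ then 2 else 0) :=
        sum_le_sum fun b _ => h b
    _ ≤ 2 * ∑ b ∈ univ.image κ, #{x ∈ S | κ x = b} + 2 := by
      rw [sum_add_distrib, mul_sum, Finset.sum_ite_eq' _ b₀ fun _ => 2]
      split_ifs <;> omega

section Retraction

variable {V : Type*} {p : V → V}

theorem exists_involutive_commute_extending (hp : ∀ v, p (p v) = p v) (σ : Perm V)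
    (hσ : Involutive σ) (hσc : ∀ c, p c = c → σ c = c)
    (hσp : ∀ ℓ ℓ', p ℓ ≠ ℓ → p ℓ' ≠ ℓ' → p ℓ = p ℓ' → p (σ ℓ) = p (σ ℓ')) :
    ∃ π : Perm V, Involutive π ∧ (∀ v, p (π v) = π (p v)) ∧ ∀ ℓ, p ℓ ≠ ℓ → π ℓ = σ ℓ := by
  classical
  have hσL : ∀ {ℓ}, p ℓ ≠ ℓ → p (σ ℓ) ≠ σ ℓ := fun {ℓ} hℓ h => by
    have hfix : σ ℓ = ℓ := by simpa only [hσ ℓ, eq_comm] using hσc _ h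
    exact hℓ (hfix ▸ h)
  let π : V → V := fun v =>
    if p v = v then (if h : ∃ ℓ, p ℓ ≠ ℓ ∧ p ℓ = v then p (σ h.choose) else v) else σ v
  have π_leaf : ∀ {ℓ}, p ℓ ≠ ℓ → π ℓ = σ ℓ := fun hℓ => if_neg hℓ
  have π_center : ∀ {ℓ}, p ℓ ≠ ℓ → π (p ℓ) = p (σ ℓ) := fun {ℓ} hℓ => by
    have h : ∃ ℓ', p ℓ' ≠ ℓ' ∧ p ℓ' = p ℓ := ⟨ℓ, hℓ, rfl⟩
    simp only [π, if_pos (hp ℓ), dif_pos h]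
    exact hσp _ _ h.choose_spec.1 hℓ h.choose_spec.2
  have π_isolated : ∀ {c}, p c = c → (¬ ∃ ℓ, p ℓ ≠ ℓ ∧ p ℓ = c) → π c = c := fun hc h => by
    simp only [π, if_pos hc, dif_neg h]
  have hπ : Involutive π := by
    intro v
    by_cases hv : p v = v
    · by_cases h : ∃ ℓ, p ℓ ≠ ℓ ∧ p ℓ = v
      · obtain ⟨ℓ, hℓ, rfl⟩ := h
        rw [π_center hℓ, π_center (hσL hℓ), hσ]
      · rw [π_isolated hv h, π_isolated hv h]
    · rw [π_leaf hv, π_leaf (hσL hv), hσ]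
  refine ⟨hπ.toPerm, hπ, fun v => ?_, fun ℓ hℓ => π_leaf hℓ⟩
  simp only [Involutive.coe_toPerm]
  by_cases hv : p v = v
  · rw [hv]
    by_cases h : ∃ ℓ, p ℓ ≠ ℓ ∧ p ℓ = v
    · obtain ⟨ℓ, hℓ, rfl⟩ := h
      rw [π_center hℓ, hp]
    · rw [π_isolated hv h, hv]
  · rw [π_leaf hv, π_center hv]

variable [Fintype V] [DecidableEq V] (p)

def leavesAt (c : V) : Finset V := {ℓ | p ℓ ≠ ℓ ∧ p ℓ = c}

/-- The leaves of a centre with at least two leaves form the class `some c` of that centre `c`;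
the leaves of all one-edge stars form the single class `none`. -/
def pairingClass (v : V) : Option V := if 2 ≤ #(leavesAt p (p v)) then some (p v) else none

variable {p}

theorem pairingClass_eq_some {x c : V} :
    pairingClass p x = some c ↔ 2 ≤ #(leavesAt p (p x)) ∧ p x = c := by
  simp only [pairingClass]; split_ifs with h <;> simp [h]

theorem pairingClass_apply_of_eq {x y : V} (h : p x = p y) :
    pairingClass p x = pairingClass p y := by
  simp only [pairingClass, h]

theorem apply_eq_of_pairingClass_preserved (σ : Perm V)
    (hσ : ∀ x, pairingClass p (σ x) = pairingClass p x) {ℓ ℓ' : V} (hℓ : p ℓ ≠ ℓ)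
    (hℓ' : p ℓ' ≠ ℓ') (h : p ℓ = p ℓ') : p (σ ℓ) = p (σ ℓ') := by
  by_cases hbig : 2 ≤ #(leavesAt p (p ℓ))
  · have hσℓ : pairingClass p (σ ℓ) = some (p ℓ) :=
      (hσ ℓ).trans (pairingClass_eq_some.2 ⟨hbig, rfl⟩)
    have hσℓ' : pairingClass p (σ ℓ') = some (p ℓ) :=
      (hσ ℓ').trans (pairingClass_eq_some.2 ⟨h ▸ hbig, h.symm⟩)
    rw [(pairingClass_eq_some.1 hσℓ).2, (pairingClass_eq_some.1 hσℓ').2]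
  · rw [(card_le_one (s := leavesAt p (p ℓ))).1 (by omega) ℓ (by simp [leavesAt, hℓ]) ℓ'
      (by simp [leavesAt, hℓ', h])]

theorem card_pairingClass_le (hp : ∀ v, p (p v) = p v)
    (hleaf : ∀ c, p c = c → ∃ ℓ, p ℓ ≠ ℓ ∧ p ℓ = c) (b : Option V) :
    #{v | pairingClass p v = b} ≤
      2 * (2 * (#{ℓ ∈ ({ℓ | p ℓ ≠ ℓ} : Finset V) | pairingClass p ℓ = b} / 2)) +
        if b = none then 2 else 0 := by
  set L : Finset V := {ℓ | p ℓ ≠ ℓ}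
  have hsplit : #{v | pairingClass p v = b} =
      #{ℓ ∈ L | pairingClass p ℓ = b} + #{c | p c = c ∧ pairingClass p c = b} := by
    rw [← card_union_of_disjoint (disjoint_left.2 fun v h₁ h₂ => by simp_all [L])]
    congr 1; ext v; simp only [L, mem_filter, mem_univ, true_and, mem_union]; tauto
  -- every centre of the class is the centre of one of the class's leaves
  have hcenters : #{c | p c = c ∧ pairingClass p c = b} ≤ #{ℓ ∈ L | pairingClass p ℓ = b} := by
    refine (card_le_card fun c hc => ?_).trans (card_image_le (f := p))
    obtain ⟨hc, hcb⟩ := by simpa using hc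
    obtain ⟨ℓ, hℓ, rfl⟩ := hleaf c hc
    exact mem_image.2 ⟨ℓ, by simpa [L, hℓ, ← pairingClass_apply_of_eq (hp ℓ)] using hcb, rfl⟩
  rcases b with _ | c
  · rw [if_pos rfl]; omega
  rw [if_neg (Option.some_ne_none c)]
  by_cases hc : 2 ≤ #(leavesAt p c)
  · have hone : #{c' | p c' = c' ∧ pairingClass p c' = some c} ≤ 1 :=
      card_le_one.2 fun x hx y hy => by
        simp only [mem_filter, mem_univ, true_and, pairingClass_eq_some] at hx hy
        rw [← hx.1, hx.2.2, ← hy.1, hy.2.2]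
    have hleaves : {ℓ ∈ L | pairingClass p ℓ = some c} = leavesAt p c := by
      ext ℓ
      simp only [L, leavesAt, mem_filter, mem_univ, true_and, pairingClass_eq_some]
      exact ⟨fun h => ⟨h.1, h.2.2⟩, fun h => ⟨h.1, h.2 ▸ hc, h.2⟩⟩
    rw [hleaves] at hsplit hcenters ⊢
    omega
  · have hleaves : {ℓ ∈ L | pairingClass p ℓ = some c} = ∅ := filter_eq_empty_iff.2
      fun ℓ _ h => hc ((pairingClass_eq_some.1 h).2 ▸ (pairingClass_eq_some.1 h).1)
    rw [hleaves, card_empty] at hsplit hcenters ⊢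
    omega

theorem exists_involutive_commute_card_le (hp : ∀ v, p (p v) = p v)
    (hleaf : ∀ c, p c = c → ∃ ℓ, p ℓ ≠ ℓ ∧ p ℓ = c) :
    ∃ π : Perm V, Involutive π ∧ (∀ v, p (π v) = π (p v)) ∧
      Fintype.card V ≤ 2 * #{ℓ | p ℓ ≠ ℓ ∧ π ℓ ≠ ℓ} + 2 := by
  obtain ⟨σ, hσ, hσL, hσκ, hσcard⟩ :=
    Perm.exists_isFiberwisePairing (pairingClass p) {ℓ | p ℓ ≠ ℓ}
  have hσc : ∀ c, p c = c → σ c = c := fun c hc =>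
    Perm.notMem_support.1 fun h => by simpa [hc] using hσL h
  obtain ⟨π, hπ, hπp, hπσ⟩ := exists_involutive_commute_extending hp σ hσ hσc
    fun _ _ => apply_eq_of_pairingClass_preserved σ hσκ
  have hmoved : ({ℓ | p ℓ ≠ ℓ ∧ π ℓ ≠ ℓ} : Finset V) = σ.support := by
    ext ℓ
    simp only [mem_filter, mem_univ, true_and, Perm.mem_support]
    refine ⟨fun ⟨hℓ, h⟩ => hπσ ℓ hℓ ▸ h, fun h => ?_⟩
    have hℓ : p ℓ ≠ ℓ := fun hc => h (hσc ℓ hc)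
    exact ⟨hℓ, hπσ ℓ hℓ ▸ h⟩
  refine ⟨π, hπ, hπp, hmoved ▸ Fintype.card_le_two_mul_add_two_of_fiberwise (pairingClass p)
    σ.support none fun b => (card_pairingClass_le hp hleaf b).trans ?_⟩
  have := hσcard b
  omega

end Retraction

namespace SimpleGraph

variable {V : Type*}

theorem exists_edgeDisjoint_iso_of_involutive [Finite V] (G : SimpleGraph V) (φ : G ≃g G)
    (hφ : Involutive φ) :
    ∃ H₁ H₂ : SimpleGraph V, H₁ ≤ G ∧ H₂ ≤ G ∧ Disjoint H₁.edgeSet H₂.edgeSet ∧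
      Nonempty (H₁ ≃g H₂) ∧ {e ∈ G.edgeSet | Sym2.map φ e ≠ e}.ncard = 2 * H₁.edgeSet.ncard ∧
      H₂.edgeSet.ncard = H₁.edgeSet.ncard := by
  have hff : Involutive (Sym2.map φ) := fun e => by
    simp only [Sym2.map_map, hφ.comp_self, Sym2.map_id', id]
  obtain ⟨E₁, hE₁G, hdisj, hmoved⟩ :=
    hff.exists_transversal G.edgeSet fun e he => φ.map_mem_edgeSet_iff.2 he
  have hE₁ : (fromEdgeSet E₁).edgeSet = E₁ := by
    rw [edgeSet_fromEdgeSet]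
    exact sdiff_eq_left.2 (Set.disjoint_left.2 fun e he => G.not_isDiag_of_mem_edgeSet (hE₁G he))
  have hE₂ : ((fromEdgeSet E₁).map φ.toEquiv.toEmbedding).edgeSet = Sym2.map φ '' E₁ := by
    rw [edgeSet_map, hE₁]; rfl
  have hcard : (Sym2.map φ '' E₁).ncard = E₁.ncard := hff.injective.injOn.ncard_image
  refine ⟨fromEdgeSet E₁, (fromEdgeSet E₁).map φ.toEquiv.toEmbedding, ?_, ?_, ?_,
    ⟨Iso.map φ.toEquiv _⟩, ?_, ?_⟩
  · rw [← edgeSet_subset_edgeSet, hE₁]; exact hE₁G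
  · rw [← edgeSet_subset_edgeSet, hE₂]
    rintro _ ⟨e, he, rfl⟩
    exact φ.map_mem_edgeSet_iff.2 (hE₁G he)
  · rwa [hE₁, hE₂]
  · rw [hmoved, Set.ncard_union_eq hdisj, hcard, hE₁, two_mul]
  · rw [hE₁, hE₂, hcard]

theorem exists_retraction_of_star_forest [Countable V] (G : SimpleGraph V)
    (h : ∀ u v, G.Adj u v → (G.neighborSet u).ncard = 1 ∨ (G.neighborSet v).ncard = 1) :
    ∃ p : V → V, (∀ v, p (p v) = p v) ∧ ∀ u v, G.Adj u v ↔ u ≠ v ∧ (p u = v ∨ p v = u) := by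
  classical
  obtain ⟨r, hr⟩ := exists_injective_nat V
  -- `r` decides which end of a one-edge star is its centre
  let P : V → V → Prop := fun v u =>
    G.neighborSet v = {u} ∧ ((G.neighborSet u).ncard ≠ 1 ∨ r v < r u)
  let p : V → V := fun v => if hv : ∃ u, P v u then hv.choose else v
  have hp_of : ∀ {v u}, P v u → p v = u := fun {v u} hvu => by
    have hv : ∃ u, P v u := ⟨u, hvu⟩
    simp only [p, dif_pos hv]
    exact Set.singleton_eq_singleton_iff.1 (hv.choose_spec.1.symm.trans hvu.1)
  have hp_ne : ∀ {v}, p v ≠ v → P v (p v) := fun {v} hv => by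
    by_cases hv' : ∃ u, P v u
    · rw [hp_of hv'.choose_spec]; exact hv'.choose_spec
    · simp [p, dif_neg hv'] at hv
  have adj_of_P : ∀ {v u}, P v u → G.Adj v u := fun {v u} hvu =>
    (G.mem_neighborSet v u).1 (hvu.1 ▸ rfl)
  have P_asymm : ∀ {v u}, P v u → ¬ P u v := fun {v u} ⟨hvu, hu⟩ ⟨huv, hv⟩ => by
    rw [huv, Set.ncard_singleton] at hu
    rw [hvu, Set.ncard_singleton] at hv
    simp only [ne_eq, not_true_eq_false, false_or] at hu hv
    omega
  have nbr_eq : ∀ {v u}, G.Adj v u → (G.neighborSet v).ncard = 1 → G.neighborSet v = {u} :=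
    fun {v u} hvu hv => by
      obtain ⟨w, hw⟩ := Set.ncard_eq_one.1 hv
      rwa [Set.eq_of_mem_singleton (hw ▸ hvu : u ∈ ({w} : Set V))]
  have p_of_leaf : ∀ {u v}, G.Adj u v → (G.neighborSet u).ncard = 1 → p u = v ∨ p v = u := by
    intro u v huv hu
    by_cases hcond : (G.neighborSet v).ncard ≠ 1 ∨ r u < r v
    · exact .inl (hp_of ⟨nbr_eq huv hu, hcond⟩)
    · push Not at hcond
      exact .inr (hp_of ⟨nbr_eq huv.symm hcond.1, .inr (hcond.2.lt_of_ne (hr.ne huv.ne'))⟩)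
  refine ⟨p, fun v => ?_, fun u v => ⟨fun huv => ⟨huv.ne, ?_⟩, ?_⟩⟩
  · by_contra hpp
    have hv : p v ≠ v := fun h => hpp (by rw [h, h])
    have hpv := hp_ne hpp
    have hw : v ∈ G.neighborSet (p v) := (adj_of_P (hp_ne hv)).symm
    rw [hpv.1, Set.mem_singleton_iff] at hw
    rw [← hw] at hpv
    exact P_asymm (hp_ne hv) hpv
  · rcases h u v huv with hu | hv
    · exact p_of_leaf huv hu
    · exact (p_of_leaf huv.symm hv).symm
  · rintro ⟨hne, hpu | hpv⟩
    · exact hpu ▸ adj_of_P (hp_ne (hpu ▸ hne.symm))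
    · exact (hpv ▸ adj_of_P (hp_ne (hpv ▸ hne))).symm

variable {G : SimpleGraph V} {p : V → V}

theorem ncard_moved_leaves_le_ncard_moved_edges [Finite V] (hp : ∀ v, p (p v) = p v)
    (hG : ∀ u v, G.Adj u v ↔ u ≠ v ∧ (p u = v ∨ p v = u)) (π : V → V)
    (hπp : ∀ v, p (π v) = π (p v)) :
    {ℓ | p ℓ ≠ ℓ ∧ π ℓ ≠ ℓ}.ncard ≤ {e ∈ G.edgeSet | Sym2.map π e ≠ e}.ncard := by
  have hinj : Set.InjOn (fun ℓ => s(ℓ, p ℓ)) {ℓ | p ℓ ≠ ℓ ∧ π ℓ ≠ ℓ} := by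
    rintro ℓ ⟨hℓ, -⟩ ℓ' - h
    rcases Sym2.eq_iff.1 h with ⟨h, -⟩ | ⟨h, -⟩
    · exact h
    · exact absurd (by rw [h, hp]) hℓ
  rw [← hinj.ncard_image]
  refine Set.ncard_le_ncard ?_ (Set.toFinite _)
  rintro _ ⟨ℓ, ⟨hℓ, hπℓ⟩, rfl⟩
  refine ⟨(hG ℓ (p ℓ)).2 ⟨hℓ.symm, .inl rfl⟩, fun h => ?_⟩
  rw [Sym2.map_mk, ← hπp, Sym2.eq_iff] at h
  rcases h with ⟨h, -⟩ | ⟨h, h'⟩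
  · exact hπℓ h
  · rw [h, hp] at h'
    exact hℓ h'

theorem exists_involutive_iso_card_le_of_star_forest [Fintype V] (G : SimpleGraph V)
    (h1 : ∀ v, (G.neighborSet v).Nonempty)
    (h2 : ∀ u v, G.Adj u v → (G.neighborSet u).ncard = 1 ∨ (G.neighborSet v).ncard = 1) :
    ∃ φ : G ≃g G, Involutive φ ∧
      Fintype.card V ≤ 2 * {e ∈ G.edgeSet | Sym2.map φ e ≠ e}.ncard + 2 := by
  classical
  obtain ⟨p, hp, hG⟩ := G.exists_retraction_of_star_forest h2
  have hleaf : ∀ c, p c = c → ∃ ℓ, p ℓ ≠ ℓ ∧ p ℓ = c := fun c hc => by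
    obtain ⟨u, hu⟩ := h1 c
    obtain ⟨hcu, hpc | hpu⟩ := (hG c u).1 hu
    · exact absurd (hc.symm.trans hpc) hcu
    · exact ⟨u, hpu ▸ hcu, hpu⟩
  obtain ⟨π, hπ, hπp, hcard⟩ := exists_involutive_commute_card_le hp hleaf
  refine ⟨⟨π, fun {u v} => by simp only [hG, hπp, π.injective.eq_iff, ne_eq]⟩, hπ, ?_⟩
  have := ncard_moved_leaves_le_ncard_moved_edges hp hG π hπp
  rw [← coe_filter_univ, Set.ncard_coe_finset] at this
  exact hcard.trans (by simpa using this)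

end SimpleGraph

/-- Every star forest on `n` vertices (a graph covering all its vertices by vertex-disjoint
stars: no isolated vertices, and every edge has an endpoint of degree 1) contains two
edge-disjoint isomorphic subgraphs, each having at least `(n-2)/4` edges. -/
theorem stmt_3 {V : Type*} [Fintype V] (G : SimpleGraph V)
    (h1 : ∀ v, (G.neighborSet v).Nonempty)
    (h2 : ∀ u v, G.Adj u v → (G.neighborSet u).ncard = 1 ∨ (G.neighborSet v).ncard = 1) :
    ∃ H₁ H₂ : SimpleGraph V, H₁ ≤ G ∧ H₂ ≤ G ∧
      Disjoint H₁.edgeSet H₂.edgeSet ∧ Nonempty (H₁ ≃g H₂) ∧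
      ((Fintype.card V : ℝ) - 2) / 4 ≤ H₁.edgeSet.ncard ∧
      ((Fintype.card V : ℝ) - 2) / 4 ≤ H₂.edgeSet.ncard := by
  obtain ⟨φ, hφ, hcard⟩ := G.exists_involutive_iso_card_le_of_star_forest h1 h2
  obtain ⟨H₁, H₂, hH₁, hH₂, hdisj, hiso, hmoved, hncard⟩ :=
    G.exists_edgeDisjoint_iso_of_involutive φ hφ
  have hn : (Fintype.card V : ℝ) ≤ 4 * H₁.edgeSet.ncard + 2 := by exact_mod_cast (by omega)
  refine ⟨H₁, H₂, hH₁, hH₂, hdisj, hiso, ?_, ?_⟩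
  · linarith
  · rw [hncard]; linarith
end

section
/- For i = 1,2 let G_i be a bipartite graph with parts A_i and B_i, where |A_1| = |A_2| = n_1 and |B_1| = |B_2| = n_2, the sets A_1 ∪ A_2 and B_1 ∪ B_2 are disjoint, and G_1 and G_2 are edge-disjoint. Then there exists a bijection f: A_1 ∪ B_1 → A_2 ∪ B_2 mapping A_1 to A_2 and B_1 to B_2 such that the number of edges of G_2 that are images of edges of G_1 under f is at least |E(G_1)| * |E(G_2)| / (n_1 * n_2). -/
/-- Two edge-disjoint bipartite graphs `G₁, G₂` with parts `Aᵢ` (of size `n₁`) and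
`Bᵢ` (of size `n₂`), where the `A`-sides and `B`-sides live on disjoint ground sets,
admit a bijection `f : A₁ ∪ B₁ → A₂ ∪ B₂` sending `A₁` to `A₂` and `B₁` to `B₂` under
which at least `|E(G₁)||E(G₂)|/(n₁ n₂)` edges of `G₁` map onto edges of `G₂`. -/
theorem stmt_5 {α β : Type*} [Fintype α] [Fintype β] [DecidableEq α] [DecidableEq β]
    (n₁ n₂ : ℕ) (hn₁ : 0 < n₁) (hn₂ : 0 < n₂)
    (A₁ A₂ : Finset α) (B₁ B₂ : Finset β)
    (hA₁ : A₁.card = n₁) (hA₂ : A₂.card = n₁) (hB₁ : B₁.card = n₂) (hB₂ : B₂.card = n₂)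
    (E₁ E₂ : Finset (α × β)) (hE₁ : E₁ ⊆ A₁ ×ˢ B₁) (hE₂ : E₂ ⊆ A₂ ×ˢ B₂)
    (hdisj : Disjoint E₁ E₂) :
    ∃ (fA : α ≃ α) (fB : β ≃ β), (∀ a ∈ A₁, fA a ∈ A₂) ∧ (∀ b ∈ B₁, fB b ∈ B₂) ∧
      (E₁.card : ℝ) * E₂.card / (n₁ * n₂) ≤
        (E₁.filter fun e => (fA e.1, fB e.2) ∈ E₂).card := by
  haveI : NeZero n₁ := ⟨hn₁.ne'⟩
  haveI : NeZero n₂ := ⟨hn₂.ne'⟩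
  let eA1 : {x // x ∈ A₁} ≃ Fin n₁ := A₁.equivFinOfCardEq hA₁
  let eA2 : {x // x ∈ A₂} ≃ Fin n₁ := A₂.equivFinOfCardEq hA₂
  let eB1 : {x // x ∈ B₁} ≃ Fin n₂ := B₁.equivFinOfCardEq hB₁
  let eB2 : {x // x ∈ B₂} ≃ Fin n₂ := B₂.equivFinOfCardEq hB₂
  let FA : Fin n₁ → Equiv.Perm α := fun i =>
    (eA1.trans ((Equiv.addLeft i).trans eA2.symm)).extendSubtype
  let FB : Fin n₂ → Equiv.Perm β := fun j =>
    (eB1.trans ((Equiv.addLeft j).trans eB2.symm)).extendSubtype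
  have hFA : ∀ (i) (a) (ha : a ∈ A₁), FA i a = eA2.symm (i + eA1 ⟨a, ha⟩) := fun i a ha => by
    simp [FA, Equiv.extendSubtype_apply_of_mem _ a ha]
  have hFB : ∀ (j) (b) (hb : b ∈ B₁), FB j b = eB2.symm (j + eB1 ⟨b, hb⟩) := fun j b hb => by
    simp [FB, Equiv.extendSubtype_apply_of_mem _ b hb]
  have hFAmem : ∀ (i) (a), a ∈ A₁ → FA i a ∈ A₂ := fun i a ha =>
    Equiv.extendSubtype_mem _ a ha
  have hFBmem : ∀ (j) (b), b ∈ B₁ → FB j b ∈ B₂ := fun j b hb =>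
    Equiv.extendSubtype_mem _ b hb
  -- key counting lemma: for fixed e ∈ E₁, the number of p with image in E₂ is E₂.card
  have key : ∀ e ∈ E₁,
      ((Finset.univ : Finset (Fin n₁ × Fin n₂)).filter
        (fun p => (FA p.1 e.1, FB p.2 e.2) ∈ E₂)).card = E₂.card := by
    intro e he
    have hmem := hE₁ he
    rw [Finset.mem_product] at hmem
    obtain ⟨ha, hb⟩ := hmem
    set g : Fin n₁ × Fin n₂ → α × β := fun p => (FA p.1 e.1, FB p.2 e.2) with hg
    have hginj : Function.Injective g := by
      intro p q hpq
      simp only [g, Prod.mk.injEq] at hpq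
      obtain ⟨h1, h2⟩ := hpq
      rw [hFA p.1 e.1 ha, hFA q.1 e.1 ha] at h1
      rw [hFB p.2 e.2 hb, hFB q.2 e.2 hb] at h2
      have h1' := eA2.symm.injective (Subtype.coe_injective h1)
      have h2' := eB2.symm.injective (Subtype.coe_injective h2)
      exact Prod.ext (add_right_cancel h1') (add_right_cancel h2')
    have himg : Finset.univ.image g = A₂ ×ˢ B₂ := by
      apply Finset.eq_of_subset_of_card_le
      · intro x hx
        rw [Finset.mem_image] at hx
        obtain ⟨p, _, rfl⟩ := hx
        exact Finset.mem_product.2 ⟨hFAmem p.1 e.1 ha, hFBmem p.2 e.2 hb⟩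
      · rw [Finset.card_product, hA₂, hB₂,
          Finset.card_image_of_injective _ hginj, Finset.card_univ]
        simp
    have hE₂img : E₂ ⊆ Finset.univ.image g := himg ▸ hE₂
    have : (Finset.univ.filter (fun p => g p ∈ E₂)).image g = E₂ := by
      apply Finset.Subset.antisymm
      · intro x hx
        rw [Finset.mem_image] at hx
        obtain ⟨p, hp, rfl⟩ := hx
        exact (Finset.mem_filter.1 hp).2
      · intro x hx
        obtain ⟨p, _, rfl⟩ := Finset.mem_image.1 (hE₂img hx)
        exact Finset.mem_image_of_mem g (Finset.mem_filter.2 ⟨Finset.mem_univ _, hx⟩)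
      
    calc (Finset.univ.filter (fun p => g p ∈ E₂)).card
        = ((Finset.univ.filter (fun p => g p ∈ E₂)).image g).card :=
          (Finset.card_image_of_injective _ hginj).symm
      _ = E₂.card := by rw [this]
  -- total count
  have total : ∑ p : Fin n₁ × Fin n₂,
      (E₁.filter fun e => (FA p.1 e.1, FB p.2 e.2) ∈ E₂).card = E₁.card * E₂.card := by
    have : ∀ p : Fin n₁ × Fin n₂,
        (E₁.filter fun e => (FA p.1 e.1, FB p.2 e.2) ∈ E₂).card
          = ∑ e ∈ E₁, if (FA p.1 e.1, FB p.2 e.2) ∈ E₂ then 1 else 0 := by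
      intro p; rw [Finset.card_filter]
    simp_rw [this]
    rw [Finset.sum_comm]
    have : ∀ e ∈ E₁, ∑ p : Fin n₁ × Fin n₂,
        (if (FA p.1 e.1, FB p.2 e.2) ∈ E₂ then 1 else 0) = E₂.card := by
      intro e he
      rw [← Finset.card_filter]
      exact key e he
    rw [Finset.sum_congr rfl this, Finset.sum_const, smul_eq_mul, mul_comm]
  -- averaging
  have hne : (Finset.univ : Finset (Fin n₁ × Fin n₂)).Nonempty := Finset.univ_nonempty
  have havg : ∃ p ∈ (Finset.univ : Finset (Fin n₁ × Fin n₂)),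
      (E₁.card : ℝ) * E₂.card / (n₁ * n₂) ≤
        ((E₁.filter fun e => (FA p.1 e.1, FB p.2 e.2) ∈ E₂).card : ℝ) := by
    apply Finset.exists_le_of_sum_le hne
    rw [Finset.sum_const, nsmul_eq_mul, Finset.card_univ]
    have hcard : (Fintype.card (Fin n₁ × Fin n₂) : ℝ) = (n₁ : ℝ) * n₂ := by
      simp
    rw [hcard]
    have hpos : (0 : ℝ) < (n₁ : ℝ) * n₂ := by positivity
    rw [mul_div_cancel₀ _ hpos.ne']
    have := total
    calc (E₁.card : ℝ) * E₂.card = ((E₁.card * E₂.card : ℕ) : ℝ) := by push_cast; ring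
      _ = ((∑ p : Fin n₁ × Fin n₂,
            (E₁.filter fun e => (FA p.1 e.1, FB p.2 e.2) ∈ E₂).card : ℕ) : ℝ) := by rw [total]
      _ = ∑ p : Fin n₁ × Fin n₂,
            ((E₁.filter fun e => (FA p.1 e.1, FB p.2 e.2) ∈ E₂).card : ℝ) := by push_cast; ring
      _ ≤ ∑ i : Fin n₁ × Fin n₂,
            ((E₁.filter fun e => (FA i.1 e.1, FB i.2 e.2) ∈ E₂).card : ℝ) := le_rfl
  obtain ⟨p, _, hp⟩ := havg
  exact ⟨FA p.1, FB p.2, fun a ha => hFAmem p.1 a ha, fun b hb => hFBmem p.2 b hb, hp⟩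
end

section
/- Let G be a bipartite graph with parts A and B such that G has m >= 10 edges. Then ISO(G) >= m^2 / (5 |A| |B|), i.e., G contains two edge-disjoint isomorphic subgraphs each with at least m^2/(5|A||B|) edges. -/
/-!
Identify the edges of `G` with a set `E ⊆ A × B` of size `m`. For a uniformly random pair of
permutations `(σ, τ)` of `A` and `B`, a fixed ordered pair of distinct edges `(e, f)` satisfies
`(σ × τ) e = f` with probability `1 / (|A| |B|)`, so some `(σ, τ)` moves at least
`m (m - 1) / (|A| |B|)` edges onto other edges. On this set `σ × τ` is injective without fixed
points, so greedily one keeps a third `X` of it with `X` disjoint from `(σ × τ) X`. The edges of `X`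
and of its image form edge-disjoint subgraphs, isomorphic via the vertex permutation `σ ∪ τ`, with
`m (m - 1) / (3 |A| |B|) ≥ m² / (5 |A| |B|)` edges each.
-/

open Finset Equiv

namespace Equiv.Perm

variable {α : Type*} [Fintype α] [DecidableEq α]

theorem card_filter_apply_eq_eq_card_filter_apply_eq (x y z : α) :
    #{σ : Perm α | σ x = y} = #{σ : Perm α | σ x = z} :=
  card_nbij' (swap y z * ·) (swap y z * ·)
    (fun σ hσ => by simp_all) (fun σ hσ => by simp_all)
    (fun σ _ => by simp [← mul_assoc]) (fun σ _ => by simp [← mul_assoc])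

theorem card_filter_apply_eq_mul_card (x y : α) :
    #{σ : Perm α | σ x = y} * Fintype.card α = (Fintype.card α).factorial := by
  have hfibers : (Fintype.card α).factorial = ∑ z : α, #{σ : Perm α | σ x = z} := by
    rw [← Fintype.card_perm, ← card_univ]
    exact card_eq_sum_card_fiberwise fun σ _ => mem_univ (σ x)
  simp [hfibers, card_filter_apply_eq_eq_card_filter_apply_eq x _ y, mul_comm]

end Equiv.Perm

theorem card_filter_prodMap_apply_eq_mul_card {α β : Type*} [Fintype α] [DecidableEq α]
    [Fintype β] [DecidableEq β] (p q : α × β) :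
    #{γ : Perm α × Perm β | Prod.map γ.1 γ.2 p = q} * Fintype.card (α × β)
      = Fintype.card (Perm α × Perm β) := by
  have hprod : ({γ : Perm α × Perm β | Prod.map γ.1 γ.2 p = q} : Finset _)
      = ({σ | σ p.1 = q.1} : Finset (Perm α)) ×ˢ ({τ | τ p.2 = q.2} : Finset (Perm β)) := by
    ext γ; simp [Prod.ext_iff]
  rw [hprod, card_product, Fintype.card_prod, Fintype.card_prod, Fintype.card_perm,
    Fintype.card_perm, mul_mul_mul_comm, Perm.card_filter_apply_eq_mul_card,
    Perm.card_filter_apply_eq_mul_card]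

def movedWithin {α : Type*} [DecidableEq α] (f : α → α) (E : Finset α) : Finset α :=
  {x ∈ E | f x ∈ E ∧ f x ≠ x}

theorem card_movedWithin_eq_sum {α : Type*} [DecidableEq α] (g : α → α) (E : Finset α) :
    #(movedWithin g E) = ∑ x ∈ E, ∑ y ∈ E.erase x, if g x = y then 1 else 0 := by
  rw [movedWithin, card_filter]
  refine sum_congr rfl fun x _ => ?_
  rw [sum_ite_eq]
  simp [and_comm]

section DoubleCounting

variable {ι α : Type*} [Fintype ι] [DecidableEq α] (f : ι → α → α) (E : Finset α) (n : ℕ)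

theorem sum_card_movedWithin_mul
    (hfib : ∀ x ∈ E, ∀ y ∈ E, #{i | f i x = y} * n = Fintype.card ι) :
    (∑ i, #(movedWithin (f i) E)) * n = #E * (#E - 1) * Fintype.card ι := by
  calc (∑ i, #(movedWithin (f i) E)) * n
      = ∑ x ∈ E, ∑ y ∈ E.erase x, #{i | f i x = y} * n := by
        simp_rw [card_movedWithin_eq_sum, card_filter, sum_mul]
        rw [sum_comm]
        exact sum_congr rfl fun x _ => sum_comm
    _ = ∑ x ∈ E, ∑ y ∈ E.erase x, Fintype.card ι :=
        sum_congr rfl fun x hx => sum_congr rfl fun y hy => hfib x hx y (mem_of_mem_erase hy)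
    _ = #E * (#E - 1) * Fintype.card ι := by
        rw [sum_congr rfl fun x hx => by rw [sum_const, card_erase_of_mem hx], sum_const]
        simp [mul_assoc]

theorem exists_card_mul_pred_le_mul_card_movedWithin [Nonempty ι]
    (hfib : ∀ x ∈ E, ∀ y ∈ E, #{i | f i x = y} * n = Fintype.card ι) :
    ∃ i, #E * (#E - 1) ≤ n * #(movedWithin (f i) E) := by
  obtain ⟨i, -, hi⟩ := exists_le_of_sum_le (s := univ) univ_nonempty
    (f := fun _ => #E * (#E - 1)) (g := fun i => n * #(movedWithin (f i) E)) <| by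
      rw [sum_const, card_univ, smul_eq_mul, ← mul_sum, mul_comm n,
        sum_card_movedWithin_mul f E n hfib, mul_comm]
  exact ⟨i, hi⟩

end DoubleCounting

theorem exists_subset_card_le_three_mul_disjoint_image {β : Type*} [DecidableEq β]
    (g : β → β) (D : Finset β) (hinj : Set.InjOn g D) (hfix : ∀ x ∈ D, g x ≠ x) :
    ∃ X ⊆ D, #D ≤ 3 * #X ∧ Disjoint X (X.image g) := by
  induction D using Finset.strongInduction with
  | H D ih =>
  rcases D.eq_empty_or_nonempty with rfl | ⟨e, he⟩
  · exact ⟨∅, empty_subset _, by simp, by simp⟩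
  -- Removing `e`, `g e` and `g⁻¹ e` costs at most three elements and leaves nothing linked to `e`.
  set D' := {x ∈ D | x ≠ e ∧ x ≠ g e ∧ g x ≠ e} with hD'
  have hD'D : D' ⊆ D := filter_subset _ _
  have he' : e ∉ D' := by simp [hD']
  obtain ⟨X', hX'D', hX'card, hX'disj⟩ := ih D' (ssubset_of_subset_of_ne hD'D (by grind))
    (hinj.mono (coe_subset.2 hD'D)) fun x hx => hfix x (hD'D hx)
  have hpre : #{x ∈ D | g x = e} ≤ 1 :=
    card_le_one.2 fun x hx y hy => by
      simp only [mem_filter] at hx hy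
      exact hinj hx.1 hy.1 (hx.2.trans hy.2.symm)
  have hcover : D ⊆ insert e (insert (g e) ({x ∈ D | g x = e} ∪ D')) := by
    intro x hx
    simp only [hD', mem_insert, mem_union, mem_filter]
    tauto
  refine ⟨insert e X', insert_subset he (hX'D'.trans hD'D), ?_, ?_⟩
  · have := card_le_card hcover
    grw [card_insert_le, card_insert_le, card_union_le, hpre, hX'card] at this
    rw [card_insert_of_notMem fun h => he' (hX'D' h)]
    omega
  · have hX' : ∀ x ∈ X', x ≠ g e ∧ g x ≠ e := fun x hx => by
      have := hX'D' hx
      simp only [hD', mem_filter] at this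
      exact this.2.2
    rw [image_insert, disjoint_insert_left, disjoint_insert_right, mem_insert, mem_image]
    refine ⟨?_, fun h => (hX' _ h).1 rfl, hX'disj⟩
    rintro (h | ⟨x, hx, rfl⟩)
    · exact hfix e he h.symm
    · exact (hX' x hx).2 rfl

theorem SimpleGraph.exists_edgeDisjoint_iso_subgraphs {V : Type*} (G : SimpleGraph V)
    (π : V ≃ V) {S : Set (Sym2 V)} (hS : S ⊆ G.edgeSet) (hπS : Sym2.map π '' S ⊆ G.edgeSet)
    (hdisj : Disjoint S (Sym2.map π '' S)) :
    ∃ H₁ H₂ : SimpleGraph V, H₁ ≤ G ∧ H₂ ≤ G ∧ Disjoint H₁.edgeSet H₂.edgeSet ∧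
      Nonempty (H₁ ≃g H₂) ∧ H₁.edgeSet.ncard = S.ncard ∧ H₂.edgeSet.ncard = S.ncard := by
  set H := fromEdgeSet S
  have hH : H.edgeSet = S :=
    (edgeSet_eq_iff _ _).2 ⟨rfl, Set.subset_compl_iff_disjoint_right.1
      (hS.trans G.edgeSet_subset_compl_diagSet)⟩
  have hHπ : (H.map π.toEmbedding).edgeSet = Sym2.map π '' S := by
    rw [edgeSet_map, hH]
    rfl
  refine ⟨H, H.map π.toEmbedding, edgeSet_subset_edgeSet.1 (hH ▸ hS),
    edgeSet_subset_edgeSet.1 (hHπ ▸ hπS), hH ▸ hHπ ▸ hdisj, ⟨Iso.map π H⟩, by rw [hH], ?_⟩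
  rw [hHπ, Set.ncard_image_of_injective S (Sym2.map.injective π.injective)]

section Bipartite

variable {V : Type*} {A B : Finset V}

theorem injective_sym2_mk_of_disjoint (hAB : Disjoint A B) :
    Function.Injective fun p : A × B => s((p.1 : V), p.2) := by
  rintro ⟨a, b⟩ ⟨a', b'⟩ h
  rcases Sym2.eq_iff.1 h with ⟨ha, hb⟩ | ⟨ha, -⟩
  · exact Prod.ext (Subtype.ext ha) (Subtype.ext hb)
  · exact absurd (ha ▸ a.2) (disjoint_left.1 hAB.symm b'.2)

theorem sym2_map_ofSubtype_mul_ofSubtype [DecidableEq V] (hAB : Disjoint A B) (σ : Equiv.Perm A)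
    (τ : Equiv.Perm B) (a : A) (b : B) :
    Sym2.map (σ.ofSubtype * τ.ofSubtype) s((a : V), b) = s((σ a : V), τ b) := by
  rw [Sym2.map_mk, Equiv.Perm.mul_apply, Equiv.Perm.mul_apply,
    Equiv.Perm.ofSubtype_apply_of_not_mem τ (disjoint_left.1 hAB a.2),
    Equiv.Perm.ofSubtype_apply_coe, Equiv.Perm.ofSubtype_apply_coe,
    Equiv.Perm.ofSubtype_apply_of_not_mem σ (disjoint_right.1 hAB (τ b).2)]

theorem SimpleGraph.edgeSet_eq_image_of_bipartite (G : SimpleGraph V)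
    (hbip : ∀ u v, G.Adj u v → (u ∈ A ∧ v ∈ B) ∨ (u ∈ B ∧ v ∈ A)) :
    G.edgeSet = (fun p : A × B => s((p.1 : V), p.2)) '' {p | G.Adj p.1 p.2} := by
  ext e
  induction e with
  | h u v =>
    simp only [mem_edgeSet, Set.mem_image, Set.mem_ofPred_eq, Prod.exists, Subtype.exists]
    constructor
    · intro huv
      rcases hbip u v huv with ⟨hu, hv⟩ | ⟨hu, hv⟩
      · exact ⟨u, hu, v, hv, huv, rfl⟩
      · exact ⟨v, hv, u, hu, huv.symm, Sym2.eq_swap⟩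
    · rintro ⟨a, -, b, -, hab, h⟩
      rcases Sym2.eq_iff.1 h with ⟨rfl, rfl⟩ | ⟨rfl, rfl⟩
      · exact hab
      · exact hab.symm

end Bipartite

theorem sq_div_le_of_mul_pred_le {m a b x : ℕ} (hm : 3 ≤ m)
    (h : m * (m - 1) ≤ a * b * (3 * x)) : (m : ℝ) ^ 2 / (5 * a * b) ≤ x := by
  -- if `a * b = 0` the left side is a division by zero, hence `0`
  rcases Nat.eq_zero_or_pos a with rfl | ha
  · simp
  rcases Nat.eq_zero_or_pos b with rfl | hb
  · simp
  have h' : ((m * (m - 1) : ℕ) : ℝ) ≤ ((a * b * (3 * x) : ℕ) : ℝ) := by exact_mod_cast h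
  push_cast [Nat.cast_sub (by omega : 1 ≤ m)] at h'
  have hm' : (3 : ℝ) ≤ m := by exact_mod_cast hm
  rw [div_le_iff₀ (by positivity)]
  nlinarith

theorem exists_perm_prodMap_disjoint_image {α β : Type*} [Fintype α] [DecidableEq α]
    [Fintype β] [DecidableEq β] (E : Finset (α × β)) :
    ∃ (σ : Perm α) (τ : Perm β) (X : Finset (α × β)), X ⊆ E ∧ X.image (Prod.map σ τ) ⊆ E ∧
      Disjoint X (X.image (Prod.map σ τ)) ∧
      #E * (#E - 1) ≤ Fintype.card α * Fintype.card β * (3 * #X) := by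
  obtain ⟨⟨σ, τ⟩, hγ⟩ := exists_card_mul_pred_le_mul_card_movedWithin
    (fun γ : Perm α × Perm β => Prod.map γ.1 γ.2) E _
    fun p _ q _ => card_filter_prodMap_apply_eq_mul_card p q
  obtain ⟨X, hXD, hD, hdisj⟩ := exists_subset_card_le_three_mul_disjoint_image (Prod.map σ τ)
    (movedWithin (Prod.map σ τ) E) (σ.injective.prodMap τ.injective).injOn
    fun x hx => (mem_filter.1 hx).2.2
  refine ⟨σ, τ, X, hXD.trans (filter_subset _ _),
    image_subset_iff.2 fun x hx => (mem_filter.1 (hXD hx)).2.1, hdisj, ?_⟩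
  rw [← Fintype.card_prod]
  exact hγ.trans (Nat.mul_le_mul_left _ hD)

theorem stmt_7_general {V : Type*} (G : SimpleGraph V) (A B : Finset V)
    (hAB : Disjoint A B)
    (hbip : ∀ u v, G.Adj u v → (u ∈ A ∧ v ∈ B) ∨ (u ∈ B ∧ v ∈ A))
    (hm : 10 ≤ G.edgeSet.ncard) :
    ∃ H₁ H₂ : SimpleGraph V, H₁ ≤ G ∧ H₂ ≤ G ∧
      Disjoint H₁.edgeSet H₂.edgeSet ∧ Nonempty (H₁ ≃g H₂) ∧
      (G.edgeSet.ncard : ℝ) ^ 2 / (5 * A.card * B.card) ≤ H₁.edgeSet.ncard ∧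
      (G.edgeSet.ncard : ℝ) ^ 2 / (5 * A.card * B.card) ≤ H₂.edgeSet.ncard := by
  classical
  set edge : A × B → Sym2 V := fun p => s((p.1 : V), p.2)
  have hedge : Function.Injective edge := injective_sym2_mk_of_disjoint hAB
  set E : Finset (A × B) := {p | G.Adj p.1 p.2}
  have hGE : G.edgeSet = edge '' E := by
    simp only [E, coe_filter, mem_univ, true_and]
    exact G.edgeSet_eq_image_of_bipartite hbip
  have hcardE : G.edgeSet.ncard = #E := by
    rw [hGE, Set.ncard_image_of_injective _ hedge, Set.ncard_coe_finset]
  obtain ⟨σ, τ, X, hXE, hgXE, hdisj, hcard⟩ := exists_perm_prodMap_disjoint_image E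
  have hπ : Sym2.map (σ.ofSubtype * τ.ofSubtype) '' (edge '' X)
      = edge '' ↑(X.image (Prod.map σ τ)) := by
    rw [Set.image_image, coe_image, Set.image_image]
    exact Set.image_congr fun p _ => sym2_map_ofSubtype_mul_ofSubtype hAB σ τ p.1 p.2
  obtain ⟨H₁, H₂, h₁, h₂, hd, hiso, hc₁, hc₂⟩ :=
    G.exists_edgeDisjoint_iso_subgraphs (σ.ofSubtype * τ.ofSubtype)
      (hGE ▸ Set.image_mono (coe_subset.2 hXE)) (hπ ▸ hGE ▸ Set.image_mono (coe_subset.2 hgXE))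
      (hπ ▸ (Set.disjoint_image_iff hedge).2 (disjoint_coe.2 hdisj))
  have hX : (edge '' X).ncard = #X := by
    rw [Set.ncard_image_of_injective _ hedge, Set.ncard_coe_finset]
  have hbound := sq_div_le_of_mul_pred_le (m := #E) (by omega) (by simpa using hcard)
  rw [hcardE]
  exact ⟨H₁, H₂, h₁, h₂, hd, hiso, hc₁ ▸ hX ▸ hbound, hc₂ ▸ hX ▸ hbound⟩

/-- Let `G` be a bipartite graph with parts `A` and `B` having `m ≥ 10` edges.  Then
`ISO(G) ≥ m² / (5|A||B|)`: `G` contains two edge-disjoint isomorphic subgraphs, each with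
at least `m²/(5|A||B|)` edges. -/
theorem stmt_7 {V : Type*} [Fintype V] (G : SimpleGraph V) (A B : Finset V)
    (hAB : Disjoint A B)
    (hbip : ∀ u v, G.Adj u v → (u ∈ A ∧ v ∈ B) ∨ (u ∈ B ∧ v ∈ A))
    (hm : 10 ≤ G.edgeSet.ncard) :
    ∃ H₁ H₂ : SimpleGraph V, H₁ ≤ G ∧ H₂ ≤ G ∧
      Disjoint H₁.edgeSet H₂.edgeSet ∧ Nonempty (H₁ ≃g H₂) ∧
      (G.edgeSet.ncard : ℝ) ^ 2 / (5 * A.card * B.card) ≤ H₁.edgeSet.ncard ∧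
      (G.edgeSet.ncard : ℝ) ^ 2 / (5 * A.card * B.card) ≤ H₂.edgeSet.ncard :=
  stmt_7_general G A B hAB hbip hm
end

section
/- Let G_2 be a bipartite graph with parts A and B, |B| = n, and let p satisfy np >= 16. Suppose every vertex of A has degree at least np/8 in G_2, every vertex of A ∪ B has degree at most np, |A| >= n^{1/3} + n/8, and n^{7/3} p^2 < n^2 p / 128. Then G_2 contains a (np/16, n^{1/3})-star-forest with centers in A, i.e., there exist k = ⌈n^{1/3}⌉ vertices x_1, ..., x_k in A and pairwise disjoint sets N_1, ..., N_k ⊆ B with N_i ⊆ N(x_i) and |N_i| >= np/16 for all i. -/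
/-- In a bipartite graph with parts `A` and `B`, `|B| = n`, in which every vertex of `A`
has degree at least `np/8`, every vertex has degree at most `np`, `np ≥ 16`,
`|A| ≥ n^{1/3} + n/8`, and `n^{7/3} p² < n² p / 128`, there is an
`(np/16, n^{1/3})`-star-forest with centers in `A`: at least `n^{1/3}` vertices of `A`
together with pairwise disjoint subsets of their neighborhoods of size at least `np/16`. -/
theorem stmt_16 {A B : Type*} [Fintype A] [Fintype B] [DecidableEq A] [DecidableEq B]
    (n : ℕ) (p : ℝ) (hp : 0 < p) (hB : Fintype.card B = n)
    (N : A → Finset B)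
    (hdegA : ∀ a : A, (n : ℝ) * p / 8 ≤ (N a).card ∧ ((N a).card : ℝ) ≤ n * p)
    (hdegB : ∀ b : B, ((Finset.univ.filter fun a : A => b ∈ N a).card : ℝ) ≤ n * p)
    (hnp : 16 ≤ (n : ℝ) * p)
    (hA : (n : ℝ) ^ ((1 : ℝ) / 3) + n / 8 ≤ Fintype.card A)
    (hsparse : (n : ℝ) ^ ((7 : ℝ) / 3) * p ^ 2 < (n : ℝ) ^ 2 * p / 128) :
    ∃ (X : Finset A) (M : A → Finset B),
      (n : ℝ) ^ ((1 : ℝ) / 3) ≤ X.card ∧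
      (∀ x ∈ X, M x ⊆ N x ∧ (n : ℝ) * p / 16 ≤ (M x).card) ∧
      (X : Set A).Pairwise (fun x y => Disjoint (M x) (M y)) := by
  classical
  have hn : 0 < (n : ℝ) := by
    by_contra h
    push_neg at h
    nlinarith
  have hnp0 : 0 < (n : ℝ) * p := by positivity
  -- key rpow facts
  have h43 : (n : ℝ) ^ ((1 : ℝ) / 3) * n = (n : ℝ) ^ ((4 : ℝ) / 3) := by
    rw [show ((4:ℝ)/3) = (1:ℝ)/3 + 1 by norm_num, Real.rpow_add hn, Real.rpow_one]
  have h73 : (n : ℝ) ^ ((4 : ℝ) / 3) * n = (n : ℝ) ^ ((7 : ℝ) / 3) := by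
    rw [show ((7:ℝ)/3) = (4:ℝ)/3 + 1 by norm_num, Real.rpow_add hn, Real.rpow_one]
  -- from sparsity: n^{4/3} p < n/128
  have hkey : (n : ℝ) ^ ((4 : ℝ) / 3) * p < n / 128 := by
    have h : ((n : ℝ) ^ ((4 : ℝ) / 3) * p) * ((n:ℝ) * p) < ((n:ℝ) / 128) * ((n:ℝ) * p) := by
      calc ((n : ℝ) ^ ((4 : ℝ) / 3) * p) * ((n:ℝ) * p)
          = ((n : ℝ) ^ ((4 : ℝ) / 3) * n) * p ^ 2 := by ring
        _ = (n : ℝ) ^ ((7 : ℝ) / 3) * p ^ 2 := by rw [h73]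
        _ < (n : ℝ) ^ 2 * p / 128 := hsparse
        _ = ((n:ℝ) / 128) * ((n:ℝ) * p) := by ring
    exact lt_of_mul_lt_mul_right h hnp0.le
  set k := ⌈(n : ℝ) ^ ((1 : ℝ) / 3)⌉₊ with hk
  -- main claim by induction
  have claim : ∀ m : ℕ, m ≤ k → ∃ (X : Finset A) (M : A → Finset B),
      X.card = m ∧
      (∀ x ∈ X, M x ⊆ N x ∧ (n : ℝ) * p / 16 ≤ (M x).card) ∧
      (X : Set A).Pairwise (fun x y => Disjoint (M x) (M y)) := by
    intro m
    induction m with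
    | zero =>
      intro _
      exact ⟨∅, fun _ => ∅, by simp, by simp, by simp⟩
    | succ m ih =>
      intro hmk
      obtain ⟨X, M, hXcard, hM, hdisj⟩ := ih (Nat.le_of_succ_le hmk)
      have hmlt : (m : ℝ) < (n : ℝ) ^ ((1 : ℝ) / 3) := by
        exact Nat.lt_ceil.mp (Nat.lt_of_lt_of_le (Nat.lt_succ_self m) hmk)
      set U := X.biUnion M with hU
      -- bound on |U|
      have hUcard : (U.card : ℝ) ≤ m * ((n : ℝ) * p) := by
        have h1 : U.card ≤ ∑ x ∈ X, (M x).card := Finset.card_biUnion_le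
        have h2 : ((∑ x ∈ X, (M x).card : ℕ) : ℝ) ≤ ∑ x ∈ X, ((n:ℝ) * p) := by
          push_cast
          apply Finset.sum_le_sum
          intro x hx
          exact le_trans (by exact_mod_cast Finset.card_le_card (hM x hx).1) (hdegA x).2
        calc (U.card : ℝ) ≤ ((∑ x ∈ X, (M x).card : ℕ) : ℝ) := by exact_mod_cast h1
          _ ≤ ∑ x ∈ X, ((n:ℝ) * p) := h2
          _ = m * ((n:ℝ) * p) := by rw [Finset.sum_const, hXcard]; push_cast; ring
      -- bad set
      set T := Finset.univ.filter (fun a : A => (n:ℝ) * p / 16 ≤ ((N a ∩ U).card : ℝ)) with hT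
      -- double counting
      have hcount : ∑ a : A, (((N a ∩ U).card : ℕ) : ℝ) ≤ (U.card : ℝ) * ((n:ℝ) * p) := by
        have hswap : ∑ a : A, ((N a ∩ U).card : ℕ) =
            ∑ b ∈ U, (Finset.univ.filter fun a : A => b ∈ N a).card := by
          have : ∀ a : A, (N a ∩ U).card = ∑ b ∈ U, if b ∈ N a then 1 else 0 := by
            intro a
            rw [Finset.inter_comm, ← Finset.filter_mem_eq_inter, Finset.card_filter]
          simp_rw [this]
          rw [Finset.sum_comm]
          congr 1
          ext b
          rw [Finset.card_filter]
        calc ∑ a : A, (((N a ∩ U).card : ℕ) : ℝ)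
            = ((∑ a : A, (N a ∩ U).card : ℕ) : ℝ) := by push_cast; rfl
          _ = ((∑ b ∈ U, (Finset.univ.filter fun a : A => b ∈ N a).card : ℕ) : ℝ) := by
              rw [hswap]
          _ = ∑ b ∈ U, ((Finset.univ.filter fun a : A => b ∈ N a).card : ℝ) := by
              push_cast; rfl
          _ ≤ ∑ b ∈ U, ((n:ℝ) * p) := Finset.sum_le_sum fun b _ => hdegB b
          _ = (U.card : ℝ) * ((n:ℝ) * p) := by rw [Finset.sum_const]; ring
      have hTbound : (T.card : ℝ) * ((n:ℝ) * p / 16) ≤ (U.card : ℝ) * ((n:ℝ) * p) := by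
        calc (T.card : ℝ) * ((n:ℝ) * p / 16)
            = ∑ _a ∈ T, ((n:ℝ) * p / 16) := by rw [Finset.sum_const]; ring
          _ ≤ ∑ a ∈ T, (((N a ∩ U).card : ℕ) : ℝ) := by
              apply Finset.sum_le_sum
              intro a ha
              exact (Finset.mem_filter.mp ha).2
          _ ≤ ∑ a : A, (((N a ∩ U).card : ℕ) : ℝ) := by
              apply Finset.sum_le_sum_of_subset_of_nonneg (Finset.filter_subset _ _)
              intros; positivity
          _ ≤ (U.card : ℝ) * ((n:ℝ) * p) := hcount
      have hTcard : (T.card : ℝ) < (n : ℝ) / 8 := by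
        have h16 : (T.card : ℝ) ≤ 16 * U.card := by
          nlinarith [hTbound]
        have : (U.card : ℝ) < (n : ℝ) ^ ((1:ℝ)/3) * ((n:ℝ) * p) := by
          calc (U.card : ℝ) ≤ m * ((n : ℝ) * p) := hUcard
            _ < (n : ℝ) ^ ((1:ℝ)/3) * ((n:ℝ) * p) := by
                apply mul_lt_mul_of_pos_right hmlt hnp0
        have h2 : (n : ℝ) ^ ((1:ℝ)/3) * ((n:ℝ) * p) = (n:ℝ) ^ ((4:ℝ)/3) * p := by
          rw [← h43]; ring
        nlinarith [hkey]
      -- find a good vertex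
      have hTne : T ≠ Finset.univ := by
        intro h
        have h1 : (Fintype.card A : ℝ) < (n:ℝ)/8 := by
          rw [← Finset.card_univ, ← h]; exact hTcard
        have h2 : (0:ℝ) ≤ (n : ℝ) ^ ((1:ℝ)/3) := by positivity
        linarith
      obtain ⟨a, haT⟩ : ∃ a : A, a ∉ T := by
        by_contra h
        push_neg at h
        exact hTne (Finset.eq_univ_iff_forall.mpr h)
      have hagood : ((N a ∩ U).card : ℝ) < (n:ℝ) * p / 16 := by
        by_contra h
        push_neg at h
        exact haT (Finset.mem_filter.mpr ⟨Finset.mem_univ a, h⟩)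
      have haX : a ∉ X := by
        intro haX
        apply haT
        refine Finset.mem_filter.mpr ⟨Finset.mem_univ a, ?_⟩
        have hsub : M a ⊆ N a ∩ U := by
          refine Finset.subset_inter (hM a haX).1 ?_
          exact Finset.subset_biUnion_of_mem M haX
        calc (n:ℝ) * p / 16 ≤ ((M a).card : ℝ) := (hM a haX).2
          _ ≤ ((N a ∩ U).card : ℝ) := by exact_mod_cast Finset.card_le_card hsub
      refine ⟨insert a X, Function.update M a (N a \ U), ?_, ?_, ?_⟩
      · rw [Finset.card_insert_of_notMem haX, hXcard]
      · intro x hx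
        rcases Finset.mem_insert.mp hx with rfl | hxX
        · rw [Function.update_self]
          refine ⟨Finset.sdiff_subset, ?_⟩
          have hsplit : (N x ∩ U).card + (N x \ U).card = (N x).card :=
            Finset.card_inter_add_card_sdiff _ _
          have := (hdegA x).1
          have hsplit' : ((N x ∩ U).card : ℝ) + ((N x \ U).card : ℝ) = ((N x).card : ℝ) := by
            exact_mod_cast hsplit
          linarith
        · have hxa : x ≠ a := fun h => haX (h ▸ hxX)
          rw [Function.update_of_ne hxa]
          exact hM x hxX
      · rw [Finset.coe_insert]
        apply Set.Pairwise.insert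
        · intro x hx y hy hxy
          have hxa : x ≠ a := fun h => haX (h ▸ hx)
          have hya : y ≠ a := fun h => haX (h ▸ hy)
          rw [Function.update_of_ne hxa, Function.update_of_ne hya]
          exact hdisj hx hy hxy
        · intro x hxX hxa
          have hxa' : x ≠ a := hxa.symm
          have hdisj1 : Disjoint (Function.update M a (N a \ U) a) (Function.update M a (N a \ U) x) := by
            rw [Function.update_self, Function.update_of_ne hxa']
            have hsub : M x ⊆ U := Finset.subset_biUnion_of_mem M hxX
            exact Finset.disjoint_of_subset_right hsub Finset.sdiff_disjoint
          exact ⟨hdisj1, hdisj1.symm⟩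
  obtain ⟨X, M, hXcard, hM, hdisj⟩ := claim k le_rfl
  exact ⟨X, M, by rw [hXcard]; exact Nat.le_ceil _, hM, hdisj⟩
end

section
/- Let G be a bipartite graph with parts A' and B, where |A'| >= n/19, every vertex of A' has degree at least d/10 in B, |B| < (d/10) · n^α with α < 1, and suppose |E(G)| >= 10. Then ISO(G) >= d · n^{1-α} / 950, i.e., G contains two edge-disjoint isomorphic subgraphs each with more than d n^{1-α}/950 edges. -/
/-!
Identify `A` with `ℤ/k` and `B` with `ℤ/l`, so that the edges of `G` form a set `Q` in the group
`ℤ/k × ℤ/l`, whose translations act on the vertices. Since `∑ₚ |Q ∩ (Q - p)| = |Q|²`, some shift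
`p ≠ 0` satisfies `|Q ∩ (Q - p)| ≥ (|Q|² - |Q|)/(kl - 1)`. As `q ↦ q + p` has no fixed points, a
greedy choice gives a third `S` of `Q ∩ (Q - p)` with `S ∩ (S + p) = ∅`; then `S` and `S + p` span
edge-disjoint subgraphs of `G` that are isomorphic via the shift, so `ISO(G) ≥ |E|²/(5|A||B|)`.
The bounds `|E| ≥ (d/10)|A|`, `|A| > n/19` and `|B| < d n^α/10` then give `d n^{1-α}/950`.
-/

open Finset

theorem Equiv.Perm.exists_subset_forall_apply_notMem_card_le_three_mul {α : Type*} [DecidableEq α]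
    (π : Equiv.Perm α) (hπ : ∀ x, π x ≠ x) (D : Finset α) :
    ∃ S ⊆ D, (∀ x ∈ S, π x ∉ S) ∧ #D ≤ 3 * #S := by
  induction D using Finset.strongInduction with
  | H D ih =>
    obtain rfl | ⟨x, hx⟩ := D.eq_empty_or_nonempty
    · exact ⟨∅, by simp⟩
    -- Removing `x` together with its two neighbours along `π` frees `x` to be added.
    set T : Finset α := {x, π x, π.symm x}
    obtain ⟨S, hSD, hS, hcard⟩ :=
      ih (D \ T) ((ssubset_iff_of_subset sdiff_subset).mpr ⟨x, hx, by simp [T]⟩)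
    have hxT : ∀ y ∈ S, y ∉ T := fun y hy => (mem_sdiff.mp (hSD hy)).2
    refine ⟨insert x S, insert_subset hx (hSD.trans sdiff_subset), ?_, ?_⟩
    · simp only [mem_insert, forall_eq_or_imp]
      refine ⟨?_, fun y hy => ?_⟩
      · rintro (h | h)
        · exact hπ x h
        · exact hxT _ h (by simp [T])
      · rintro (h | h)
        · exact hxT y hy (by simp [T, ← h])
        · exact hS y hy h
    · have hxS : x ∉ S := fun h => hxT x h (by simp [T])
      calc #D ≤ #(D \ T) + #T := card_le_card_sdiff_add_card
        _ ≤ 3 * #S + 3 := add_le_add hcard card_le_three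
        _ = 3 * #(insert x S) := by rw [card_insert_of_notMem hxS]; ring

section AddGroup

variable {Γ : Type*} [AddGroup Γ] [Fintype Γ] [DecidableEq Γ]

theorem Finset.sum_card_filter_add_mem (Q : Finset Γ) :
    ∑ p, #{q ∈ Q | p + q ∈ Q} = #Q ^ 2 := by
  have hfiber : ∀ q, #{p | p + q ∈ Q} = #Q := fun q =>
    card_equiv (Equiv.addRight q) (by simp)
  simp_rw [card_filter]
  rw [sum_comm]
  simp_rw [← card_filter, hfiber, sum_const, smul_eq_mul, sq]

theorem Finset.exists_ne_zero_card_mul_le_card_filter_add_mem [Nontrivial Γ] (Q : Finset Γ) :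
    ∃ p ≠ 0, #Q * (#Q - 1) ≤ (Fintype.card Γ - 1) * #{q ∈ Q | p + q ∈ Q} := by
  have hsum : ∑ p ∈ univ.erase 0, #{q ∈ Q | p + q ∈ Q} = #Q * (#Q - 1) := by
    have := add_sum_erase univ (fun p => #{q ∈ Q | p + q ∈ Q}) (mem_univ 0)
    rw [sum_card_filter_add_mem] at this
    simp only [zero_add, filter_mem_eq_inter, inter_self] at this
    rw [Nat.mul_sub_one, ← sq]
    omega
  have hne : (univ.erase (0 : Γ)).Nonempty := by
    obtain ⟨p, hp⟩ := exists_ne (0 : Γ)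
    exact ⟨p, by simp [hp]⟩
  obtain ⟨p, hp, hle⟩ := exists_le_of_sum_le hne (f := fun _ => #Q * (#Q - 1))
    (g := fun p => (Fintype.card Γ - 1) * #{q ∈ Q | p + q ∈ Q}) (by
      rw [sum_const, ← mul_sum, hsum, card_erase_of_mem (mem_univ _), card_univ, smul_eq_mul])
  exact ⟨p, ne_of_mem_erase hp, hle⟩

theorem Finset.exists_subset_translate_disjoint [Nontrivial Γ] (Q : Finset Γ) :
    ∃ (p : Γ) (S : Finset Γ), S ⊆ Q ∧ (∀ q ∈ S, p + q ∈ Q) ∧ (∀ q ∈ S, p + q ∉ S) ∧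
      #Q * (#Q - 1) ≤ 3 * (Fintype.card Γ - 1) * #S := by
  obtain ⟨p, hp, hD⟩ := Q.exists_ne_zero_card_mul_le_card_filter_add_mem
  obtain ⟨S, hSD, hS, hcard⟩ :=
    (Equiv.addLeft p).exists_subset_forall_apply_notMem_card_le_three_mul
      (fun q h => hp (by simpa using h)) {q ∈ Q | p + q ∈ Q}
  refine ⟨p, S, fun q hq => (mem_filter.mp (hSD hq)).1, fun q hq => (mem_filter.mp (hSD hq)).2,
    hS, ?_⟩
  calc #Q * (#Q - 1) ≤ (Fintype.card Γ - 1) * #{q ∈ Q | p + q ∈ Q} := hD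
    _ ≤ (Fintype.card Γ - 1) * (3 * #S) := Nat.mul_le_mul_left _ hcard
    _ = 3 * (Fintype.card Γ - 1) * #S := by ring

end AddGroup

namespace SimpleGraph

variable {V : Type*}

def HasEdgeDisjointIsoSubgraphs (G : SimpleGraph V) (s : ℕ) : Prop :=
  ∃ H₁ H₂ : SimpleGraph V, H₁ ≤ G ∧ H₂ ≤ G ∧ Disjoint H₁.edgeSet H₂.edgeSet ∧
    Nonempty (H₁ ≃g H₂) ∧ s ≤ H₁.edgeSet.ncard ∧ s ≤ H₂.edgeSet.ncard

theorem hasEdgeDisjointIsoSubgraphs_of_perm (G : SimpleGraph V) (φ : Equiv.Perm V)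
    {S : Set (Sym2 V)} (hS : S ⊆ G.edgeSet) (hφS : Sym2.map φ '' S ⊆ G.edgeSet)
    (hdisj : Disjoint S (Sym2.map φ '' S)) : G.HasEdgeDisjointIsoSubgraphs S.ncard := by
  have hS₁ : (fromEdgeSet S).edgeSet = S := by
    rw [edgeSet_fromEdgeSet, sdiff_eq_left, Set.disjoint_right]
    exact fun e he hS' => G.not_isDiag_of_mem_edgeSet (hS hS') he
  have hS₂ : ((fromEdgeSet S).map φ.toEmbedding).edgeSet = Sym2.map φ '' S := by
    rw [edgeSet_map, hS₁]
    rfl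
  refine ⟨fromEdgeSet S, (fromEdgeSet S).map φ.toEmbedding, ?_, ?_, ?_, ⟨Iso.map φ _⟩, ?_, ?_⟩
  · rwa [← edgeSet_subset_edgeSet, hS₁]
  · rwa [← edgeSet_subset_edgeSet, hS₂]
  · rwa [hS₁, hS₂]
  · rw [hS₁]
  · rw [hS₂, Set.ncard_image_of_injective _ (Sym2.map.injective φ.injective)]

section Coordinates

variable {A B : Finset V} {Γ₁ Γ₂ : Type*} (e₁ : Γ₁ ≃ A) (e₂ : Γ₂ ≃ B)

/- Potential edges between `A` and `B` get coordinates in `Γ₁ × Γ₂`, and translations of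
`Γ₁ × Γ₂` act on `V` (on `A` and `B` separately, fixing everything else). -/

def coordEdge (q : Γ₁ × Γ₂) : Sym2 V := s((e₁ q.1 : V), e₂ q.2)

def coordShift [DecidableEq V] [AddGroup Γ₁] [AddGroup Γ₂] (p : Γ₁ × Γ₂) : Equiv.Perm V :=
  (Equiv.addLeft p.1).extendDomain e₁ * (Equiv.addLeft p.2).extendDomain e₂

variable {e₁ e₂}

theorem coordEdge_injective (hAB : Disjoint A B) : Function.Injective (coordEdge e₁ e₂) := by
  rintro ⟨i, j⟩ ⟨i', j'⟩ h
  rcases Sym2.eq_iff.mp h with ⟨h₁, h₂⟩ | ⟨h₁, -⟩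
  · exact Prod.ext (e₁.injective (Subtype.ext h₁)) (e₂.injective (Subtype.ext h₂))
  · exact absurd (h₁ ▸ (e₂ j').2) (Finset.disjoint_left.mp hAB (e₁ i).2)

theorem map_coordShift_coordEdge [DecidableEq V] [AddGroup Γ₁] [AddGroup Γ₂] (hAB : Disjoint A B)
    (p q : Γ₁ × Γ₂) : Sym2.map (coordShift e₁ e₂ p) (coordEdge e₁ e₂ q) =
      coordEdge e₁ e₂ (p + q) := by
  have h₁ : coordShift e₁ e₂ p (e₁ q.1) = e₁ (p.1 + q.1) := by
    rw [coordShift, Equiv.Perm.mul_apply, Equiv.Perm.extendDomain_apply_not_subtype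
      (Equiv.addLeft p.2) e₂ (Finset.disjoint_left.mp hAB (e₁ q.1).2),
      Equiv.Perm.extendDomain_apply_image, Equiv.coe_addLeft]
  have h₂ : coordShift e₁ e₂ p (e₂ q.2) = e₂ (p.2 + q.2) := by
    rw [coordShift, Equiv.Perm.mul_apply, Equiv.Perm.extendDomain_apply_image,
      Equiv.Perm.extendDomain_apply_not_subtype _ _ (Finset.disjoint_right.mp hAB (e₂ _).2),
      Equiv.coe_addLeft]
  simp [coordEdge, h₁, h₂]

theorem IsBipartiteWith.card_edgeFinset_eq_card_adj_coord [Fintype V] [Fintype Γ₁] [Fintype Γ₂]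
    {G : SimpleGraph V} [DecidableRel G.Adj] (hG : G.IsBipartiteWith A B) :
    #G.edgeFinset = #{q : Γ₁ × Γ₂ | G.Adj (e₁ q.1) (e₂ q.2)} := by
  symm
  refine card_bij (fun q _ => coordEdge e₁ e₂ q) (fun q hq => by simpa [coordEdge] using hq)
    (fun q _ q' _ h => coordEdge_injective (disjoint_coe.mp hG.disjoint) h) ?_
  intro e he
  induction e with | h a b
  rw [mem_edgeFinset, mem_edgeSet] at he
  rcases hG.mem_of_adj he with ⟨ha, hb⟩ | ⟨ha, hb⟩
  · exact ⟨(e₁.symm ⟨a, ha⟩, e₂.symm ⟨b, hb⟩), by simpa using he, by simp [coordEdge]⟩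
  · exact ⟨(e₁.symm ⟨b, hb⟩, e₂.symm ⟨a, ha⟩), by simpa using he.symm,
      by simp [coordEdge, Sym2.eq_swap]⟩

theorem hasEdgeDisjointIsoSubgraphs_of_translate [DecidableEq V] [AddGroup Γ₁] [AddGroup Γ₂]
    (G : SimpleGraph V) (hAB : Disjoint A B) {p : Γ₁ × Γ₂} {S : Finset (Γ₁ × Γ₂)}
    (hS : ∀ q ∈ S, G.Adj (e₁ q.1) (e₂ q.2)) (hpS : ∀ q ∈ S, G.Adj (e₁ (p + q).1) (e₂ (p + q).2))
    (hdisj : ∀ q ∈ S, p + q ∉ S) : G.HasEdgeDisjointIsoSubgraphs #S := by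
  have hmap : Sym2.map (coordShift e₁ e₂ p) '' (coordEdge e₁ e₂ '' S) =
      coordEdge e₁ e₂ '' ((p + ·) '' S) := by
    simp only [Set.image_image, map_coordShift_coordEdge hAB]
  have hcard : (coordEdge e₁ e₂ '' S).ncard = #S := by
    rw [Set.ncard_image_of_injective _ (coordEdge_injective hAB), Set.ncard_coe_finset]
  rw [← hcard]
  refine G.hasEdgeDisjointIsoSubgraphs_of_perm (coordShift e₁ e₂ p) ?_ ?_ ?_
  · rintro _ ⟨q, hq, rfl⟩
    exact hS q hq
  · rw [hmap]
    rintro _ ⟨_, ⟨q, hq, rfl⟩, rfl⟩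
    exact hpS q hq
  · rw [hmap, Set.disjoint_image_iff (coordEdge_injective hAB), Set.disjoint_right]
    rintro _ ⟨q, hq, rfl⟩
    exact hdisj q hq

end Coordinates

theorem IsBipartiteWith.exists_hasEdgeDisjointIsoSubgraphs [Fintype V] [DecidableEq V]
    {G : SimpleGraph V} [DecidableRel G.Adj] {A B : Finset V} (hG : G.IsBipartiteWith A B)
    (hm : 3 ≤ #G.edgeFinset) :
    ∃ s, G.HasEdgeDisjointIsoSubgraphs s ∧ #G.edgeFinset ^ 2 ≤ 5 * #A * #B * s := by
  have hmAB : #G.edgeFinset ≤ #A * #B := by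
    rw [← isBipartiteWith_sum_degrees_eq_card_edges hG, ← smul_eq_mul]
    exact sum_le_card_nsmul _ _ _ fun v hv => isBipartiteWith_degree_le hG hv
  have : NeZero #A := ⟨fun h => by rw [h] at hmAB; omega⟩
  have : NeZero #B := ⟨fun h => by rw [h] at hmAB; omega⟩
  have : Nontrivial (Fin #A × Fin #B) := by
    rw [← Fintype.one_lt_card_iff_nontrivial, Fintype.card_prod, Fintype.card_fin,
      Fintype.card_fin]
    omega
  obtain ⟨p, S, hSQ, hpS, hdisj, hcard⟩ := exists_subset_translate_disjoint
    {q : Fin #A × Fin #B | G.Adj (A.equivFin.symm q.1) (B.equivFin.symm q.2)}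
  rw [← hG.card_edgeFinset_eq_card_adj_coord, Fintype.card_prod, Fintype.card_fin,
    Fintype.card_fin] at hcard
  refine ⟨#S, hasEdgeDisjointIsoSubgraphs_of_translate G (disjoint_coe.mp hG.disjoint)
    (fun q hq => by simpa using hSQ hq) (fun q hq => by simpa using hpS q hq) hdisj, ?_⟩
  have h1 : 1 ≤ #A * #B := by omega
  zify [h1, (by omega : 1 ≤ #G.edgeFinset)] at hcard ⊢
  nlinarith

end SimpleGraph

theorem stmt_17_general {V : Type*} [Fintype V] [DecidableEq V] (G : SimpleGraph V)
    [DecidableRel G.Adj] (A B : Finset V) (hAB : Disjoint A B)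
    (hbip : ∀ u v, G.Adj u v → (u ∈ A ∧ v ∈ B) ∨ (u ∈ B ∧ v ∈ A))
    (n d α : ℝ) (hn : 0 < n)
    (hdeg : ∀ a ∈ A, d / 10 ≤ (G.degree a : ℝ))
    (hA : n / 19 < (A.card : ℝ))
    (hB : (B.card : ℝ) < d * n ^ α / 10)
    (hm : 10 ≤ d / 10 * (A.card : ℝ)) :
    ∃ H₁ H₂ : SimpleGraph V, H₁ ≤ G ∧ H₂ ≤ G ∧
      Disjoint H₁.edgeSet H₂.edgeSet ∧ Nonempty (H₁ ≃g H₂) ∧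
      d * n ^ (1 - α) / 950 ≤ (H₁.edgeSet.ncard : ℝ) ∧
      d * n ^ (1 - α) / 950 ≤ (H₂.edgeSet.ncard : ℝ) := by
  have hG : SimpleGraph.IsBipartiteWith G A B := ⟨disjoint_coe.mpr hAB, hbip⟩
  have hedges : d / 10 * #A ≤ #G.edgeFinset := by
    rw [← SimpleGraph.isBipartiteWith_sum_degrees_eq_card_edges hG, Nat.cast_sum, mul_comm,
      ← nsmul_eq_mul]
    exact card_nsmul_le_sum _ _ _ hdeg
  have hm3 : 3 ≤ #G.edgeFinset := by exact_mod_cast (by linarith : (3 : ℝ) ≤ #G.edgeFinset)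
  obtain ⟨s, ⟨H₁, H₂, h₁, h₂, hdisj, hiso, hs₁, hs₂⟩, hs⟩ :=
    hG.exists_hasEdgeDisjointIsoSubgraphs hm3
  suffices hbound : d * n ^ (1 - α) / 950 ≤ s from
    ⟨H₁, H₂, h₁, h₂, hdisj, hiso, hbound.trans (by exact_mod_cast hs₁),
      hbound.trans (by exact_mod_cast hs₂)⟩
  have hk : (0 : ℝ) < #A := by nlinarith
  have hsq : (d / 10 * #A) ^ 2 ≤ 5 * #A * #B * s := by
    refine (pow_le_pow_left₀ (by linarith) hedges 2).trans ?_
    exact_mod_cast hs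
  have hdk : d * #A ≤ 50 * n ^ α * s := by
    have : 5 * #A * #B * (s : ℝ) ≤ 5 * #A * (d * n ^ α / 10) * s := by gcongr
    nlinarith
  rw [Real.rpow_sub hn, Real.rpow_one, mul_div_assoc', div_div, div_le_iff₀ (by positivity)]
  nlinarith

/-- Let `G` be bipartite with disjoint parts `A'` and `B`, where every vertex of `A'` has
degree at least `d/10 ≥ 1`, `|A'| > n/19`, `|B| < d n^α / 10` with `α < 1`, and
`(d/10)|A'| ≥ 10`.  Then `ISO(G) ≥ d n^{1-α} / 950`: there are two edge-disjoint
isomorphic subgraphs each with at least `d n^{1-α}/950` edges. -/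
theorem stmt_17 {V : Type*} [Fintype V] [DecidableEq V] (G : SimpleGraph V)
    [DecidableRel G.Adj] (A B : Finset V) (hAB : Disjoint A B)
    (hbip : ∀ u v, G.Adj u v → (u ∈ A ∧ v ∈ B) ∨ (u ∈ B ∧ v ∈ A))
    (n d α : ℝ) (hn : 0 < n) (hd : 0 < d) (hα : α < 1)
    (hdeg : ∀ a ∈ A, d / 10 ≤ (G.degree a : ℝ))
    (hd10 : 1 ≤ d / 10)
    (hA : n / 19 < (A.card : ℝ))
    (hB : (B.card : ℝ) < d * n ^ α / 10)
    (hm : 10 ≤ d / 10 * (A.card : ℝ)) :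
    ∃ H₁ H₂ : SimpleGraph V, H₁ ≤ G ∧ H₂ ≤ G ∧
      Disjoint H₁.edgeSet H₂.edgeSet ∧ Nonempty (H₁ ≃g H₂) ∧
      d * n ^ (1 - α) / 950 ≤ (H₁.edgeSet.ncard : ℝ) ∧
      d * n ^ (1 - α) / 950 ≤ (H₂.edgeSet.ncard : ℝ) :=
  stmt_17_general G A B hAB hbip n d α hn hdeg hA hB hm
end
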